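/- arXiv:2409.18525 — 3 statements merged into one kernel-verified Lean document; each statement's English description precedes it below -/
import Mathlib

section
/- (Weighted key estimate.) Let Ω ⊆ ℝⁿ be open, let φ ∈ Φ_w(Ω) satisfy (A0), (A1)_ω, (A2)_ω and (aInc)_p with p ∈ (1,∞), and let ω ∈ A_p. Then there exist β > 0 and a nonnegative h ∈ L¹(Ω,ω) ∩ L^∞(Ω) such that φ(x, (β/|B|)∫_{B∩Ω}|f| dy)^{1/p} ≤ (1/|B|)∫_{B∩Ω} φ(y,|f|)^{1/p} dy + h(x)^{1/p} + (1/|B|)∫_{B∩Ω} h(y)^{1/p} dy for every open ball B, a.e. x ∈ B∩Ω, and every f ∈ L^φ(Ω,ω) with ρ_φ^ω(f) ≤ 1. -/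
open MeasureTheory Metric Filter Set
open scoped ENNReal NNReal Topology

noncomputable section

/-- `ℝⁿ` with Lebesgue measure. -/
abbrev Rn (n : ℕ) : Type := EuclideanSpace ℝ (Fin n)

/-- The `ω`-measure of a set `E`, `ω(E) = ∫_E ω(x) dx`. -/
def wSet {n : ℕ} (ω : Rn n → ℝ≥0∞) (E : Set (Rn n)) : ℝ≥0∞ := ∫⁻ x in E, ω x

/-- A weight: a measurable, a.e. positive and finite, locally integrable function. -/
def IsWeight {n : ℕ} (ω : Rn n → ℝ≥0∞) : Prop :=
  Measurable ω ∧ (∀ᵐ x ∂(volume : Measure (Rn n)), 0 < ω x ∧ ω x < ∞) ∧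
    ∀ (z : Rn n) (r : ℝ), 0 < r → wSet ω (ball z r) ≠ ∞

/-- The Muckenhoupt class `A_q`, `1 < q < ∞`:
`sup_B |B|^{-q} ω(B) (∫_B ω^{-q'/q})^{q-1} < ∞` where `q'/q = 1/(q-1)`. -/
def MuckenhouptAq {n : ℕ} (q : ℝ) (ω : Rn n → ℝ≥0∞) : Prop :=
  IsWeight ω ∧ ∃ C : ℝ≥0∞, C ≠ ∞ ∧ ∀ (z : Rn n) (r : ℝ), 0 < r →
    (volume (ball z r)) ^ (-q) * wSet ω (ball z r) *
      (∫⁻ y in ball z r, (ω y) ^ (-(1 / (q - 1)))) ^ (q - 1) ≤ C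

/-- The class `A_∞ = ⋃_{1<q<∞} A_q`. -/
def MuckenhouptAinfty {n : ℕ} (ω : Rn n → ℝ≥0∞) : Prop :=
  ∃ q : ℝ, 1 < q ∧ MuckenhouptAq q ω

/-- `(aInc)_p`: `t ↦ φ(x,t)/t^p` is almost increasing, uniformly in a.e. `x ∈ Ω`. -/
def AInc {n : ℕ} (Ω : Set (Rn n)) (φ : Rn n → ℝ≥0∞ → ℝ≥0∞) (p : ℝ) : Prop :=
  ∃ a : ℝ≥0, 1 ≤ a ∧ ∀ᵐ x ∂(volume : Measure (Rn n)), x ∈ Ω →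
    ∀ s t : ℝ≥0, 0 < s → s < t →
      φ x s / (s : ℝ≥0∞) ^ p ≤ a * (φ x t / (t : ℝ≥0∞) ^ p)

/-- A weak Φ-function on `Ω`. -/
structure IsWeakPhi {n : ℕ} (Ω : Set (Rn n)) (φ : Rn n → ℝ≥0∞ → ℝ≥0∞) : Prop where
  meas : ∀ f : Rn n → ℝ≥0∞, Measurable f → Measurable fun x => φ x (f x)
  mono : ∀ᵐ x ∂(volume : Measure (Rn n)), x ∈ Ω → Monotone (φ x)
  map_zero : ∀ᵐ x ∂(volume : Measure (Rn n)), x ∈ Ω → φ x 0 = 0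
  tendsto_zero : ∀ᵐ x ∂(volume : Measure (Rn n)), x ∈ Ω →
    Tendsto (fun t : ℝ≥0 => φ x t) (𝓝[>] 0) (𝓝 0)
  tendsto_top : ∀ᵐ x ∂(volume : Measure (Rn n)), x ∈ Ω →
    Tendsto (fun t : ℝ≥0 => φ x t) atTop (𝓝 ∞)
  aInc_one : AInc Ω φ 1

/-- Condition (A0). -/
def A0 {n : ℕ} (Ω : Set (Rn n)) (φ : Rn n → ℝ≥0∞ → ℝ≥0∞) : Prop :=
  ∃ β₀ : ℝ≥0, 0 < β₀ ∧ β₀ ≤ 1 ∧ ∀ᵐ x ∂(volume : Measure (Rn n)), x ∈ Ω →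
    φ x β₀ ≤ 1 ∧ 1 ≤ φ x ((β₀ : ℝ≥0∞)⁻¹)

/-- Condition (A1)_ω. -/
def A1w {n : ℕ} (Ω : Set (Rn n)) (ω : Rn n → ℝ≥0∞) (φ : Rn n → ℝ≥0∞ → ℝ≥0∞) : Prop :=
  ∃ β₁ : ℝ≥0, 0 < β₁ ∧ β₁ ≤ 1 ∧ ∀ (z : Rn n) (r : ℝ), 0 < r → wSet ω (ball z r) ≤ 1 →
    ∀ᵐ x ∂(volume : Measure (Rn n)), ∀ᵐ y ∂(volume : Measure (Rn n)),
      x ∈ ball z r ∩ Ω → y ∈ ball z r ∩ Ω →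
        ∀ t : ℝ≥0, 1 ≤ φ y t → φ y t ≤ (wSet ω (ball z r))⁻¹ →
          φ x (β₁ * t) ≤ φ y t

/-- `h ∈ L¹(Ω,ω) ∩ L^∞(Ω)`, `h ≥ 0`. -/
def MemL1wLinf {n : ℕ} (Ω : Set (Rn n)) (ω : Rn n → ℝ≥0∞) (h : Rn n → ℝ≥0) : Prop :=
  Measurable h ∧ (∫⁻ x in Ω, (h x : ℝ≥0∞) * ω x) ≠ ∞ ∧
    ∃ C : ℝ≥0, ∀ᵐ x ∂(volume : Measure (Rn n)), x ∈ Ω → h x ≤ C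

/-- Condition (A2)_ω. -/
def A2w {n : ℕ} (Ω : Set (Rn n)) (ω : Rn n → ℝ≥0∞) (φ : Rn n → ℝ≥0∞ → ℝ≥0∞) : Prop :=
  ∀ s : ℝ≥0, 0 < s → ∃ β₂ : ℝ≥0, 0 < β₂ ∧ β₂ ≤ 1 ∧ ∃ h : Rn n → ℝ≥0,
    MemL1wLinf Ω ω h ∧
      ∀ᵐ x ∂(volume : Measure (Rn n)), ∀ᵐ y ∂(volume : Measure (Rn n)),
        x ∈ Ω → y ∈ Ω → ∀ t : ℝ≥0, φ y t ≤ s →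
          φ x (β₂ * t) ≤ φ y t + h x + h y

/-- The weighted modular `ρ_φ^ω(g) = ∫_Ω φ(x, g(x)) ω(x) dx` (applied to `g = |f|`). -/
def wModular {n : ℕ} (Ω : Set (Rn n)) (ω : Rn n → ℝ≥0∞) (φ : Rn n → ℝ≥0∞ → ℝ≥0∞)
    (g : Rn n → ℝ≥0∞) : ℝ≥0∞ := ∫⁻ x in Ω, φ x (g x) * ω x

/-- The weighted Luxemburg norm `‖f‖_{L^φ(Ω,ω)}` (applied to `g = |f|`). -/
def wNorm {n : ℕ} (Ω : Set (Rn n)) (ω : Rn n → ℝ≥0∞) (φ : Rn n → ℝ≥0∞ → ℝ≥0∞)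
    (g : Rn n → ℝ≥0∞) : ℝ≥0∞ :=
  ⨅ (lam : ℝ≥0) (_ : 0 < lam)
    (_ : wModular Ω ω φ (fun x => g x / lam) ≤ 1), (lam : ℝ≥0∞)

/-- Membership in the weighted generalized Orlicz space `L^φ(Ω,ω)` (applied to `g = |f|`). -/
def MemLw {n : ℕ} (Ω : Set (Rn n)) (ω : Rn n → ℝ≥0∞) (φ : Rn n → ℝ≥0∞ → ℝ≥0∞)
    (g : Rn n → ℝ≥0∞) : Prop :=
  ∃ lam : ℝ≥0, 0 < lam ∧ wModular Ω ω φ (fun x => g x / lam) ≤ 1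

/-- The Hardy–Littlewood maximal operator (relative to `Ω`), applied to `g = |f|`. -/
def maximal {n : ℕ} (Ω : Set (Rn n)) (g : Rn n → ℝ≥0∞) (x : Rn n) : ℝ≥0∞ :=
  ⨆ (z : Rn n) (r : ℝ) (_ : 0 < r) (_ : x ∈ ball z r),
    (volume (ball z r))⁻¹ * ∫⁻ y in ball z r ∩ Ω, g y

/-- An `x`-independent weak Φ-function. -/
structure IsWeakPhi0 (ψ : ℝ≥0∞ → ℝ≥0∞) : Prop where
  mono : Monotone ψ
  map_zero : ψ 0 = 0
  tendsto_zero : Tendsto (fun t : ℝ≥0 => ψ t) (𝓝[>] 0) (𝓝 0)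
  tendsto_top : Tendsto (fun t : ℝ≥0 => ψ t) atTop (𝓝 ∞)
  aInc_one : ∃ a : ℝ≥0, 1 ≤ a ∧ ∀ s t : ℝ≥0, 0 < s → s < t →
    ψ s / (s : ℝ≥0∞) ≤ a * (ψ t / (t : ℝ≥0∞))

/-- The real-valued reciprocal `1/p(x)` of an exponent `p : Ω → [1,∞]` (with `1/∞ = 0`). -/
def invExp {n : ℕ} (p : Rn n → ℝ≥0∞) (x : Rn n) : ℝ := ((p x)⁻¹).toReal

/-- Local log-Hölder continuity of `g` on `Ω`. -/
def LocallyLogHolder {n : ℕ} (Ω : Set (Rn n)) (g : Rn n → ℝ) : Prop :=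
  ∃ c : ℝ, 0 < c ∧ ∀ x ∈ Ω, ∀ y ∈ Ω,
    |g x - g y| ≤ c / Real.log (Real.exp 1 + 1 / dist x y)

/-- The log-Hölder decay condition for `g` with limit `g∞`. -/
def LogHolderDecay {n : ℕ} (Ω : Set (Rn n)) (g : Rn n → ℝ) (ginf : ℝ) : Prop :=
  ∃ c : ℝ, 0 < c ∧ ∀ x ∈ Ω, |g x - ginf| ≤ c / Real.log (Real.exp 1 + ‖x‖)

/-- `1/p ∈ P^log(Ω)`: local log-Hölder continuity plus log-Hölder decay. -/
def PLog {n : ℕ} (Ω : Set (Rn n)) (p : Rn n → ℝ≥0∞) : Prop :=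
  LocallyLogHolder Ω (invExp p) ∧
    ∃ pinf : ℝ≥0∞, 1 ≤ pinf ∧ LogHolderDecay Ω (invExp p) ((pinf)⁻¹).toReal

/-- The variable exponent Φ-function `φ(x,t) = t^{p(x)}`, with
`t^∞ := ∞·χ_{(1,∞)}(t)`. -/
def varExp {n : ℕ} (p : Rn n → ℝ≥0∞) (x : Rn n) (t : ℝ≥0∞) : ℝ≥0∞ :=
  if p x = ∞ then (if t ≤ 1 then 0 else ∞) else t ^ (p x).toReal

/-- The double phase functional `φ(x,t) = t^p + a(x) t^q`. -/
def doublePhase {n : ℕ} (a : Rn n → ℝ) (p q : ℝ) (x : Rn n) (t : ℝ≥0∞) : ℝ≥0∞ :=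
  t ^ p + ENNReal.ofReal (a x) * t ^ q

/-!
With `ψ = φ^{1/p}`, `(aInc)_p` says that `ψ(x, t) / t` is almost increasing. This yields a Jensen
inequality `ψ(ε ⨍ g) ≤ ⨍ ψ(g)`, and lets one pass between `ψ(·, t)` and `ψ(·, s)` for `t ≤ s`.

Split `f` according to whether `φ(y, |f(y)|) ≤ 1`. On the small part, (A2)_ω bounds `ψ(x, β₂|f(y)|)`
by `ψ(y, |f(y)|) + h(x)^{1/p} + h(y)^{1/p}`, and Jensen concludes. On the large part, Hölder's
inequality with the `A_p` weight and `ρ(f) ≤ 1` bound the mean of `ψ(y, |f|)` by `c ω(B)^{-1/p}`.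
If the mean `I` of `|f|` is small, (A0) suffices. Otherwise the set where `|f| > t = εI` carries
half of the mass of `|f|`. If `φ(y, t) < 1` on a non-null part of it, (A2)_ω bounds `φ(x, βI)` by a
constant, which lies below the mean of `ψ(y, |f|)` because `I` is large; if not, (A1)_ω, or the
Hölder bound where `φ(y, t) > ω(B)⁻¹`, transfers `ψ(y, t)` to `ψ(x, βI)`.
-/

/-- `(aInc)₁` for a function of `t ∈ [0, ∞]`, cross-multiplied so that no division occurs. -/
def AIncOne (A : ℝ≥0) (ψ : ℝ≥0∞ → ℝ≥0∞) : Prop :=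
  ∀ ⦃u v : ℝ≥0∞⦄, 0 < u → u ≤ v → v ≠ ∞ → ψ u * v ≤ A * u * ψ v

theorem aIncOne_rpow_inv {φ : ℝ≥0∞ → ℝ≥0∞} {a : ℝ≥0} {p : ℝ} (hp : 0 < p) (ha : 1 ≤ a)
    (h : ∀ s t : ℝ≥0, 0 < s → s < t → φ s / (s : ℝ≥0∞) ^ p ≤ a * (φ t / (t : ℝ≥0∞) ^ p)) :
    AIncOne (a ^ (1 / p)) fun t => φ t ^ (1 / p) := by
  have hq : 0 ≤ 1 / p := by positivity
  intro u v hu huv hv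
  rw [ENNReal.coe_rpow_of_nonneg _ hq]
  obtain rfl | hlt := huv.eq_or_lt
  · calc φ u ^ (1 / p) * u = 1 * u * φ u ^ (1 / p) := by ring
      _ ≤ _ := by gcongr; exact ENNReal.one_le_rpow (by exact_mod_cast ha) (by positivity)
  lift v to ℝ≥0 using hv
  lift u to ℝ≥0 using (hlt.trans ENNReal.coe_lt_top).ne
  have hu0 : (u : ℝ≥0∞) ^ p ≠ 0 := by simpa [ENNReal.rpow_eq_zero_iff, hp] using hu.ne'
  have hv0 : (v : ℝ≥0∞) ^ p ≠ 0 := by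
    simpa [ENNReal.rpow_eq_zero_iff, hp] using (hu.trans hlt).ne'
  have hcross : φ u * (v : ℝ≥0∞) ^ p ≤ a * (u : ℝ≥0∞) ^ p * φ v := by
    have := h u v (by exact_mod_cast hu) (by exact_mod_cast hlt)
    rw [ENNReal.div_le_iff hu0 (by simp [hp.le])] at this
    calc φ u * (v : ℝ≥0∞) ^ p ≤ a * (φ v / (v : ℝ≥0∞) ^ p) * (u : ℝ≥0∞) ^ p * (v : ℝ≥0∞) ^ p := by
          gcongr
      _ = a * (u : ℝ≥0∞) ^ p * (φ v / (v : ℝ≥0∞) ^ p * (v : ℝ≥0∞) ^ p) := by ring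
      _ = a * (u : ℝ≥0∞) ^ p * φ v := by rw [ENNReal.div_mul_cancel hv0 (by simp [hp.le])]
  have hpow := ENNReal.rpow_le_rpow hcross hq
  rw [ENNReal.mul_rpow_of_nonneg _ _ hq, ENNReal.mul_rpow_of_nonneg _ _ hq,
    ENNReal.mul_rpow_of_nonneg _ _ hq, one_div, ENNReal.rpow_rpow_inv hp.ne',
    ENNReal.rpow_rpow_inv hp.ne'] at hpow
  simpa only [one_div] using hpow

theorem AIncOne.mul_le_mul_max_one {A : ℝ≥0} {ψ : ℝ≥0∞ → ℝ≥0∞} (hψ : AIncOne A ψ) (hA : 1 ≤ A)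
    {β : ℝ≥0} (hβ : 0 < β) (h1 : 1 ≤ ψ (β : ℝ≥0∞)⁻¹) {t : ℝ≥0∞} (ht : t ≠ ∞) :
    β * t ≤ A * max 1 (ψ t) := by
  have hβ0 : (β : ℝ≥0∞) ≠ 0 := by exact_mod_cast hβ.ne'
  obtain hle | hlt := le_or_gt t (β : ℝ≥0∞)⁻¹
  · calc (β : ℝ≥0∞) * t ≤ β * (β : ℝ≥0∞)⁻¹ := by gcongr
      _ = 1 * 1 := by rw [ENNReal.mul_inv_cancel hβ0 ENNReal.coe_ne_top, one_mul]
      _ ≤ A * max 1 (ψ t) := by gcongr; exacts [by exact_mod_cast hA, le_max_left _ _]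
  · have hcross := hψ (ENNReal.inv_pos.2 ENNReal.coe_ne_top) hlt.le ht
    calc (β : ℝ≥0∞) * t ≤ β * (ψ (β : ℝ≥0∞)⁻¹ * t) := by gcongr; exact le_mul_of_one_le_left' h1
      _ ≤ β * (A * (β : ℝ≥0∞)⁻¹ * ψ t) := by gcongr
      _ = A * ψ t * (β * (β : ℝ≥0∞)⁻¹) := by ring
      _ ≤ A * max 1 (ψ t) := by
        rw [ENNReal.mul_inv_cancel hβ0 ENNReal.coe_ne_top, mul_one]; gcongr; exact le_max_right _ _

theorem AIncOne.apply_le_of_le {A : ℝ≥0} {ψ : ℝ≥0∞ → ℝ≥0∞} (hψ : AIncOne A ψ) (hψ0 : ψ 0 = 0)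
    {β : ℝ≥0} (hβ : 0 < β) (h1 : ψ β ≤ 1) {τ K : ℝ≥0∞} (hτ : τ ≤ β) (hK : A * τ ≤ β * K) :
    ψ τ ≤ K := by
  obtain rfl | hτ0 := eq_zero_or_pos τ
  · simp [hψ0]
  have hβ0 : (β : ℝ≥0∞) ≠ 0 := by exact_mod_cast hβ.ne'
  refine (ENNReal.mul_le_mul_iff_left hβ0 ENNReal.coe_ne_top).1 ?_
  calc ψ τ * β ≤ A * τ * ψ β := hψ hτ0 hτ ENNReal.coe_ne_top
    _ ≤ A * τ * 1 := by gcongr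
    _ ≤ K * β := by rw [mul_one, mul_comm K]; exact hK

theorem ENNReal.coe_mul_le_div_two {ε : ℝ≥0} (h : 2 * ε ≤ 1) (I : ℝ≥0∞) : ε * I ≤ I / 2 := by
  rw [ENNReal.div_eq_inv_mul]
  gcongr
  exact ENNReal.le_inv_iff_mul_le.2 (by rw [mul_comm]; exact_mod_cast h)

theorem ENNReal.mul_mul_le_of_mul_le_mul {A β₀ βE : ℝ≥0} {I K : ℝ≥0∞} (hA : A ≠ 0)
    (h0 : A * A * βE ≤ β₀ * β₀) (hI : β₀ * I ≤ A * K) : A * (βE * I) ≤ β₀ * K := by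
  refine (ENNReal.mul_le_mul_iff_left (c := A) (by exact_mod_cast hA) ENNReal.coe_ne_top).1 ?_
  calc A * (βE * I) * A = (A * A * βE : ℝ≥0) * I := by push_cast; ring
    _ ≤ (β₀ * β₀ : ℝ≥0) * I := by gcongr
    _ = β₀ * (β₀ * I) := by push_cast; ring
    _ ≤ β₀ * (A * K) := by gcongr
    _ = β₀ * K * A := by ring

theorem ENNReal.le_of_lt_mul_of_mul_le {A β₀ βE C : ℝ≥0} {I K : ℝ≥0∞} (hA : A ≠ 0) (hβ₀ : β₀ ≠ 0)
    (hτ : β₀ < βE * I) (hI : β₀ * I ≤ A * K) (hC : A * C * βE ≤ β₀ * β₀) : C ≤ K := by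
  have hA' : (A : ℝ≥0∞) * (β₀ * β₀) ≠ 0 := by simp [hA, hβ₀]
  refine (ENNReal.mul_le_mul_iff_right hA' (by finiteness)).1 ?_
  calc (A : ℝ≥0∞) * (β₀ * β₀) * C = A * C * β₀ * β₀ := by ring
    _ ≤ A * C * β₀ * (βE * I) := by gcongr
    _ = (A * C * βE : ℝ≥0) * (β₀ * I) := by push_cast; ring
    _ ≤ (β₀ * β₀ : ℝ≥0) * (A * K) := by gcongr
    _ = A * (β₀ * β₀) * K := by push_cast; ring

theorem exists_key_constants {A β₀ β₁ β₂ c C : ℝ≥0} (hA : 1 ≤ A) (hβ₀ : 0 < β₀) (hβ₁ : 0 < β₁)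
    (hβ₂ : 0 < β₂) :
    ∃ ε βE : ℝ≥0, 0 < ε ∧ 0 < βE ∧ 2 * A * ε ≤ 1 ∧ 2 * A * A * ε ≤ 1 ∧ 4 * A * c * ε ≤ 1 ∧
      A * A * βE ≤ β₀ * β₀ ∧ A * (1 + C) * βE ≤ β₀ * β₀ ∧ βE ≤ β₁ * ε ∧ βE ≤ β₂ * ε := by
  have hA0 : 0 < A := zero_lt_one.trans_le hA
  set ε : ℝ≥0 := (4 * A * A * (c + 1))⁻¹
  have hε1 : 4 * A * A * (c + 1) * ε = 1 := mul_inv_cancel₀ (by positivity)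
  have hεAA : 2 * A * A * ε ≤ 1 := hε1 ▸ by
    calc 2 * A * A * ε = 2 * A * A * 1 * ε := by ring
      _ ≤ 4 * A * A * (c + 1) * ε := by gcongr <;> norm_num
  refine ⟨ε, min (min (β₀ * β₀ / (A * A)) (β₀ * β₀ / (A * (1 + C)))) (min (β₁ * ε) (β₂ * ε)),
    by positivity, by simp only [lt_min_iff]; refine ⟨⟨?_, ?_⟩, ?_, ?_⟩ <;> positivity, ?_, hεAA,
    ?_, ?_, ?_, (min_le_right _ _).trans (min_le_left _ _),
    (min_le_right _ _).trans (min_le_right _ _)⟩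
  · calc 2 * A * ε = 2 * 1 * A * ε := by ring
      _ ≤ 2 * A * A * ε := by gcongr
      _ ≤ 1 := hεAA
  · exact hε1 ▸ calc 4 * A * c * ε = 4 * A * 1 * c * ε := by ring
      _ ≤ 4 * A * A * (c + 1) * ε := by gcongr; exact le_self_add
  · exact (mul_le_mul_right ((min_le_left _ _).trans (min_le_left _ _)) _).trans_eq
      (mul_div_cancel₀ _ (by positivity))
  · exact (mul_le_mul_right ((min_le_left _ _).trans (min_le_right _ _)) _).trans_eq
      (mul_div_cancel₀ _ (by positivity))

theorem Monotone.apply_div_two_mul_add_le_max {g : ℝ≥0∞ → ℝ≥0∞} (hg : Monotone g)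
    (β a b : ℝ≥0∞) : g (β / 2 * (a + b)) ≤ max (g (β * a)) (g (β * b)) := by
  have hmul : Monotone fun t => g (β * t) := hg.comp fun _ _ h => mul_le_mul_right h β
  calc g (β / 2 * (a + b)) ≤ g (β / 2 * (2 * max a b)) := hg <| by
        gcongr; rw [two_mul]; exact add_le_add (le_max_left a b) (le_max_right a b)
    _ = g (β * max a b) := by
        rw [← mul_assoc, ENNReal.div_mul_cancel two_ne_zero ENNReal.ofNat_ne_top]
    _ = max (g (β * a)) (g (β * b)) := hmul.map_max

section Superlevel

variable {α : Type*} [MeasurableSpace α] {μ : Measure α} {S : Set α} {g : α → ℝ≥0∞}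

theorem setLIntegral_le_mul_add_setLIntegral_superlevel (hg : Measurable g) (t : ℝ≥0∞) :
    ∫⁻ y in S, g y ∂μ ≤ t * μ S + ∫⁻ y in S ∩ {y | t < g y}, g y ∂μ := by
  rw [← lintegral_inter_add_sdiff g S (measurableSet_lt measurable_const hg), add_comm]
  gcongr
  calc ∫⁻ y in S \ {y | t < g y}, g y ∂μ ≤ ∫⁻ _ in S \ {y | t < g y}, t ∂μ :=
        setLIntegral_mono_ae aemeasurable_const (.of_forall fun y hy => not_lt.1 hy.2)
    _ ≤ t * μ S := by rw [setLIntegral_const]; gcongr; exact sdiff_subset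

/-- The superlevel set `{g > t}`, `t ≤ I / 2`, carries at least half of the mass of `g`. -/
theorem mul_setAverage_le_of_superlevel (hS : MeasurableSet S) (hg : Measurable g) {Ψ : α → ℝ≥0∞}
    {ν t m c : ℝ≥0∞} (hν0 : ν ≠ 0) (hν : ν ≠ ∞) (hSν : μ S ≤ ν) (hfin : ∫⁻ y in S, g y ∂μ ≠ ∞)
    (ht : t ≤ (ν⁻¹ * ∫⁻ y in S, g y ∂μ) / 2) (hc : c ≠ ∞)
    (hpt : ∀ᵐ y ∂μ.restrict S, t < g y → m * g y ≤ c * Ψ y) :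
    m * (ν⁻¹ * ∫⁻ y in S, g y ∂μ) ≤ 2 * c * (ν⁻¹ * ∫⁻ y in S, Ψ y ∂μ) := by
  have hT : MeasurableSet (S ∩ {y | t < g y}) := hS.inter (measurableSet_lt measurable_const hg)
  have hlow : t * μ S ≤ (∫⁻ y in S, g y ∂μ) / 2 :=
    calc t * μ S ≤ (ν⁻¹ * ∫⁻ y in S, g y ∂μ) / 2 * ν := by gcongr
      _ = (∫⁻ y in S, g y ∂μ) / 2 := by
        rw [div_eq_mul_inv, div_eq_mul_inv, mul_right_comm, mul_right_comm _ _ ν, mul_comm ν⁻¹,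
          mul_assoc, ENNReal.mul_inv_cancel hν0 hν, one_mul]
  have hhalf : (∫⁻ y in S, g y ∂μ) / 2 ≤ ∫⁻ y in S ∩ {y | t < g y}, g y ∂μ := by
    rw [← ENNReal.add_le_add_iff_left (ENNReal.div_ne_top hfin two_ne_zero), ENNReal.add_halves]
    exact (setLIntegral_le_mul_add_setLIntegral_superlevel hg t).trans (by gcongr)
  have hsuper : m * ∫⁻ y in S ∩ {y | t < g y}, g y ∂μ ≤ c * ∫⁻ y in S, Ψ y ∂μ := by
    rw [← lintegral_const_mul _ hg, ← lintegral_const_mul' _ _ hc]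
    refine (lintegral_mono_ae ?_).trans (lintegral_mono_set inter_subset_left)
    filter_upwards [ae_restrict_of_ae_restrict_of_subset inter_subset_left hpt, ae_restrict_mem hT]
      with y hy hyT
    exact hy hyT.2
  have htwo : 2 * ((∫⁻ y in S, g y ∂μ) / 2) = ∫⁻ y in S, g y ∂μ :=
    ENNReal.mul_div_cancel two_ne_zero ENNReal.ofNat_ne_top
  calc m * (ν⁻¹ * ∫⁻ y in S, g y ∂μ) = ν⁻¹ * (2 * (m * ((∫⁻ y in S, g y ∂μ) / 2))) := by
        rw [mul_left_comm 2 m, htwo]; ring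
    _ ≤ ν⁻¹ * (2 * (c * ∫⁻ y in S, Ψ y ∂μ)) :=
        mul_le_mul_right (mul_le_mul_right ((mul_le_mul_right hhalf m).trans hsuper) 2) _
    _ = 2 * c * (ν⁻¹ * ∫⁻ y in S, Ψ y ∂μ) := by ring

end Superlevel

/-- Jensen's inequality for `ψ` with `(aInc)₁`, at the price of a factor `ε` inside `ψ`. -/
theorem AIncOne.apply_mul_setAverage_le {α : Type*} [MeasurableSpace α] {μ : Measure α}
    {S : Set α} {g : α → ℝ≥0∞} {A : ℝ≥0} {ψ : ℝ≥0∞ → ℝ≥0∞} (hψ : AIncOne A ψ) (hψ0 : ψ 0 = 0)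
    (hA : 1 ≤ A) {ε : ℝ≥0} (hε : 2 * A * A * ε ≤ 1) (hS : MeasurableSet S) (hg : Measurable g)
    (hgt : ∀ y, g y ≠ ∞) {ν : ℝ≥0∞} (hν0 : ν ≠ 0) (hν : ν ≠ ∞) (hSν : μ S ≤ ν)
    (hfin : ∫⁻ y in S, g y ∂μ ≠ ∞) :
    ψ (ε * (ν⁻¹ * ∫⁻ y in S, g y ∂μ)) ≤ ν⁻¹ * ∫⁻ y in S, ψ (g y) ∂μ := by
  set I := ν⁻¹ * ∫⁻ y in S, g y ∂μ
  set K := ν⁻¹ * ∫⁻ y in S, ψ (g y) ∂μ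
  have hI : I ≠ ∞ := ENNReal.mul_ne_top (ENNReal.inv_ne_top.2 hν0) hfin
  obtain hI0 | hI0 := eq_zero_or_pos I
  · simp [hI0, hψ0]
  have hI2 : I / 2 ≠ 0 := (ENNReal.half_pos hI0.ne').ne'
  have hI2' : I / 2 ≠ ∞ := ENNReal.div_ne_top hI two_ne_zero
  have hhalf : ψ (I / 2) ≤ A * K := by
    refine (ENNReal.mul_le_mul_iff_left hI0.ne' hI).1 ?_
    calc ψ (I / 2) * I ≤ 2 * (A * (I / 2)) * K :=
          mul_setAverage_le_of_superlevel hS hg hν0 hν hSν hfin le_rfl (by finiteness)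
            (.of_forall fun y hy => hψ (ENNReal.half_pos hI0.ne') hy.le (hgt y))
      _ = A * K * I := by
          rw [mul_left_comm 2, ENNReal.mul_div_cancel two_ne_zero ENNReal.ofNat_ne_top]; ring
  obtain hε0 | hε0 := eq_zero_or_pos ε
  · simp [hε0, hψ0]
  have hεI : (ε : ℝ≥0∞) * I ≤ I / 2 := ENNReal.coe_mul_le_div_two (by
    calc 2 * ε = 2 * 1 * 1 * ε := by ring
      _ ≤ 2 * A * A * ε := by gcongr
      _ ≤ 1 := hε) I
  refine (ENNReal.mul_le_mul_iff_left hI2 hI2').1 ?_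
  calc ψ (ε * I) * (I / 2) ≤ A * (ε * I) * ψ (I / 2) :=
        hψ (ENNReal.mul_pos (by exact_mod_cast hε0.ne') hI0.ne') hεI hI2'
    _ ≤ A * (ε * I) * (A * K) := by gcongr
    _ = (2 * A * A * ε : ℝ≥0) * K * (I / 2) := by
        push_cast
        rw [show (2 : ℝ≥0∞) * A * A * ε * K * (I / 2) = A * A * ε * K * (2 * (I / 2)) by ring,
          ENNReal.mul_div_cancel two_ne_zero ENNReal.ofNat_ne_top]
        ring
    _ ≤ 1 * K * (I / 2) := by gcongr; exact_mod_cast hε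
    _ = K * (I / 2) := by rw [one_mul]

/-- The alternative `min W m = W` is excluded by the bound `c W` on the mean of `Ψ` and the
smallness of `ε`. -/
theorem le_setAverage_of_superlevel_min_le {α : Type*} [MeasurableSpace α] {μ : Measure α}
    {S : Set α} (hS : MeasurableSet S) {F Ψ : α → ℝ≥0∞} (hF : Measurable F) {ν : ℝ≥0∞}
    (hν0 : ν ≠ 0) (hν : ν ≠ ∞) (hSν : μ S ≤ ν) (hfin : ∫⁻ y in S, F y ∂μ ≠ ∞)
    (hF0 : ∫⁻ y in S, F y ∂μ ≠ 0) {A c ε : ℝ≥0} (hA : 1 ≤ A) (hεA : 2 * A * ε ≤ 1)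
    (hεc : 4 * A * c * ε ≤ 1) {W m : ℝ≥0∞} (hW0 : W ≠ 0) (hW : W ≠ ∞)
    (hK : ν⁻¹ * ∫⁻ y in S, Ψ y ∂μ ≤ c * W)
    (hpt : ∀ᵐ y ∂μ.restrict S, ε * (ν⁻¹ * ∫⁻ y in S, F y ∂μ) < F y →
      min W m * F y ≤ A * (ε * (ν⁻¹ * ∫⁻ y in S, F y ∂μ)) * Ψ y) :
    m ≤ ν⁻¹ * ∫⁻ y in S, Ψ y ∂μ := by
  set I := ν⁻¹ * ∫⁻ y in S, F y ∂μ
  set K := ν⁻¹ * ∫⁻ y in S, Ψ y ∂μ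
  have hI : I ≠ ∞ := ENNReal.mul_ne_top (ENNReal.inv_ne_top.2 hν0) hfin
  have hI0 : I ≠ 0 := mul_ne_zero (ENNReal.inv_ne_zero.2 hν) hF0
  have hε2 : 2 * ε ≤ 1 := calc 2 * ε = 2 * 1 * ε := by ring
    _ ≤ 2 * A * ε := by gcongr
    _ ≤ 1 := hεA
  have hmin : min W m ≤ 2 * A * ε * K := by
    refine (ENNReal.mul_le_mul_iff_left hI0 hI).1 ?_
    calc min W m * I ≤ 2 * (A * (ε * I)) * K :=
          mul_setAverage_le_of_superlevel hS hF hν0 hν hSν hfin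
            (ENNReal.coe_mul_le_div_two hε2 I) (by finiteness) hpt
      _ = 2 * A * ε * K * I := by ring
  have hhalf : 2 * A * ε * K ≤ W / 2 :=
    calc (2 : ℝ≥0∞) * A * ε * K ≤ 2 * A * ε * (c * W) := by gcongr
      _ = (4 * A * c * ε : ℝ≥0) * W / 2 := by
          push_cast
          rw [ENNReal.div_eq_inv_mul, show (4 : ℝ≥0∞) = 2 * 2 by norm_num]
          rw [show (2 : ℝ≥0∞)⁻¹ * (2 * 2 * A * c * ε * W) = 2⁻¹ * 2 * (2 * A * ε * (c * W)) by ring,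
            ENNReal.inv_mul_cancel two_ne_zero ENNReal.ofNat_ne_top, one_mul]
      _ ≤ 1 * W / 2 := by gcongr; exact_mod_cast hεc
      _ = W / 2 := by rw [one_mul]
  have hm : min W m = m :=
    min_eq_right (le_of_not_ge fun hWm => (ENNReal.half_lt_self hW0 hW).not_ge
      ((min_eq_left hWm).symm.le.trans (hmin.trans hhalf)))
  calc m ≤ 2 * A * ε * K := hm ▸ hmin
    _ ≤ 1 * K := by gcongr; exact_mod_cast hεA
    _ = K := one_mul K

theorem lintegral_le_weighted_holder {α : Type*} [MeasurableSpace α] (μ : Measure α) {p : ℝ}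
    (hp : 1 < p) {ω G : α → ℝ≥0∞} (hω : Measurable ω) (hω0 : ∀ᵐ y ∂μ, ω y ≠ 0)
    (hωt : ∀ᵐ y ∂μ, ω y ≠ ∞) (hG : Measurable G) :
    ∫⁻ y, G y ∂μ ≤
      (∫⁻ y, G y ^ p * ω y ∂μ) ^ (1 / p) *
        ((∫⁻ y, ω y ^ (-(1 / (p - 1))) ∂μ) ^ (p - 1)) ^ (1 / p) := by
  have hp0 : p ≠ 0 := by positivity
  have hq : (0 : ℝ) ≤ 1 / p := by positivity
  have hconj : p.HolderConjugate (p / (p - 1)) := Real.HolderConjugate.conjExponent hp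
  have hsplit : ∀ᵐ y ∂μ, G y = (G y ^ p * ω y) ^ (1 / p) * (ω y)⁻¹ ^ (1 / p) := by
    filter_upwards [hω0, hωt] with y h0 ht
    rw [← ENNReal.mul_rpow_of_nonneg _ _ hq, mul_assoc, ENNReal.mul_inv_cancel h0 ht, mul_one,
      one_div, ENNReal.rpow_rpow_inv hp0]
  calc ∫⁻ y, G y ∂μ
      = ∫⁻ y, ((fun y => (G y ^ p * ω y) ^ (1 / p)) * fun y => (ω y)⁻¹ ^ (1 / p)) y ∂μ :=
        lintegral_congr_ae hsplit
    _ ≤ _ := ENNReal.lintegral_mul_le_Lp_mul_Lq μ hconj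
        (((hG.pow_const p).mul hω).pow_const _).aemeasurable (hω.inv.pow_const _).aemeasurable
    _ = _ := by
        congr 1
        · simp_rw [one_div, ENNReal.rpow_inv_rpow hp0]
        · rw [← ENNReal.rpow_mul]
          congr 1
          · refine lintegral_congr fun y => ?_
            rw [← ENNReal.rpow_mul, ← ENNReal.rpow_neg_one, ← ENNReal.rpow_mul]
            congr 1
            field_simp
          · field_simp

theorem IsWeight.wSet_ball_ne_zero {n : ℕ} {ω : Rn n → ℝ≥0∞} (hω : IsWeight ω) (z : Rn n)
    {r : ℝ} (hr : 0 < r) : wSet ω (ball z r) ≠ 0 := by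
  intro h0
  have hzero : ∀ᵐ y ∂volume.restrict (ball z r), ω y = 0 := (lintegral_eq_zero_iff hω.1).1 h0
  have hfalse : ∀ᵐ _ ∂volume.restrict (ball z r), False := by
    filter_upwards [hzero, ae_restrict_of_ae hω.2.1] with y h1 h2
    exact h2.1.ne' h1
  rw [ae_iff, Measure.restrict_apply' measurableSet_ball] at hfalse
  simp only [not_false_eq_true, ofPred_true, univ_inter] at hfalse
  exact (measure_ball_pos volume z hr).ne' hfalse

theorem MuckenhouptAq.exists_setLIntegral_le {n : ℕ} {p : ℝ} {ω : Rn n → ℝ≥0∞} (hp : 1 < p)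
    (hω : MuckenhouptAq p ω) :
    ∃ c : ℝ≥0, ∀ (z : Rn n) (r : ℝ), 0 < r → ∀ S ⊆ ball z r, ∀ G : Rn n → ℝ≥0∞, Measurable G →
      (volume (ball z r))⁻¹ * ∫⁻ y in S, G y ≤
        c * ((wSet ω (ball z r))⁻¹ * ∫⁻ y in S, G y ^ p * ω y) ^ (1 / p) := by
  obtain ⟨hωw, C, hC, hAp⟩ := hω
  have hp0 : 0 < p := by linarith
  have hq : (0 : ℝ) ≤ 1 / p := by positivity
  refine ⟨C.toNNReal ^ (1 / p), fun z r hr S hS G hG => ?_⟩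
  set ν := volume (ball z r)
  set w := wSet ω (ball z r)
  set Y := ∫⁻ y in ball z r, ω y ^ (-(1 / (p - 1)))
  have hν0 : ν ≠ 0 := (measure_ball_pos _ _ hr).ne'
  have hν : ν ≠ ∞ := measure_ball_lt_top.ne
  have hw0 : w ≠ 0 := hωw.wSet_ball_ne_zero z hr
  have hw : w ≠ ∞ := hωw.2.2 z r hr
  have hνp0 : ν ^ p ≠ 0 := by simp [ENNReal.rpow_eq_zero_iff, hν0, hν]
  have hνp : ν ^ p ≠ ∞ := by simp [ENNReal.rpow_eq_top_iff, hν0, hν]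
  have hY : Y ^ (p - 1) ≤ C * ν ^ p * w⁻¹ :=
    calc Y ^ (p - 1) = ν ^ (-p) * w * Y ^ (p - 1) * (ν ^ p * w⁻¹) := by
          rw [ENNReal.rpow_neg]
          calc Y ^ (p - 1) = ((ν ^ p)⁻¹ * ν ^ p) * (w * w⁻¹) * Y ^ (p - 1) := by
                rw [ENNReal.inv_mul_cancel hνp0 hνp, ENNReal.mul_inv_cancel hw0 hw, one_mul,
                  one_mul]
            _ = _ := by ring
      _ ≤ C * (ν ^ p * w⁻¹) := by gcongr; exact hAp z r hr
      _ = C * ν ^ p * w⁻¹ := by ring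
  have hholder := lintegral_le_weighted_holder (volume.restrict S) hp hωw.1
    (ae_restrict_of_ae (hωw.2.1.mono fun _ h => h.1.ne'))
    (ae_restrict_of_ae (hωw.2.1.mono fun _ h => h.2.ne)) hG
  calc ν⁻¹ * ∫⁻ y in S, G y
      ≤ ν⁻¹ * ((∫⁻ y in S, G y ^ p * ω y) ^ (1 / p) * (C * ν ^ p * w⁻¹) ^ (1 / p)) := by
        refine mul_le_mul_right (hholder.trans ?_) _
        gcongr
        exact (ENNReal.rpow_le_rpow (lintegral_mono_set hS) (by linarith)).trans hY
    _ = (ν⁻¹ * ν) * (C ^ (1 / p) * (w⁻¹ * ∫⁻ y in S, G y ^ p * ω y) ^ (1 / p)) := by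
        rw [ENNReal.mul_rpow_of_nonneg _ _ hq, ENNReal.mul_rpow_of_nonneg _ _ hq,
          ENNReal.mul_rpow_of_nonneg _ _ hq, one_div, ENNReal.rpow_rpow_inv hp0.ne']
        ring
    _ = _ := by
        rw [ENNReal.inv_mul_cancel hν0 hν, one_mul, ENNReal.coe_rpow_of_nonneg _ hq,
          ENNReal.coe_toNNReal hC]

theorem AInc.exists_ae_aIncOne {n : ℕ} {Ω : Set (Rn n)} {φ : Rn n → ℝ≥0∞ → ℝ≥0∞} {p : ℝ}
    (h : AInc Ω φ p) (hp : 0 < p) :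
    ∃ A : ℝ≥0, 1 ≤ A ∧ ∀ᵐ x ∂(volume : Measure (Rn n)), x ∈ Ω →
      AIncOne A fun t => φ x t ^ (1 / p) := by
  obtain ⟨a, ha, hae⟩ := h
  exact ⟨a ^ (1 / p), NNReal.one_le_rpow ha (by positivity),
    hae.mono fun x hx hxΩ => aIncOne_rpow_inv hp ha (hx hxΩ)⟩

/-- `(A1)_ω` without its side conditions: outside of them the bound `ω(B)⁻¹ ≤ φ(y,t)` holds. -/
theorem A1w.exists_ae_min_le {n : ℕ} {Ω : Set (Rn n)} {ω : Rn n → ℝ≥0∞}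
    {φ : Rn n → ℝ≥0∞ → ℝ≥0∞} (hA1 : A1w Ω ω φ) :
    ∃ β₁ : ℝ≥0, 0 < β₁ ∧ ∀ (z : Rn n) (r : ℝ), 0 < r →
      ∀ᵐ x ∂(volume : Measure (Rn n)), ∀ᵐ y ∂(volume : Measure (Rn n)),
        x ∈ ball z r ∩ Ω → y ∈ ball z r ∩ Ω → ∀ t : ℝ≥0, 1 ≤ φ y t →
          min (wSet ω (ball z r))⁻¹ (φ x (β₁ * t)) ≤ φ y t := by
  obtain ⟨β₁, hβ₁, -, hA1⟩ := hA1
  refine ⟨β₁, hβ₁, fun z r hr => ?_⟩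
  by_cases hw : wSet ω (ball z r) ≤ 1
  · filter_upwards [hA1 z r hr hw] with x hx
    filter_upwards [hx] with y hxy hxB hyB t h1
    obtain hle | hlt := le_total (φ y t) (wSet ω (ball z r))⁻¹
    · exact min_le_of_right_le (hxy hxB hyB t h1 hle)
    · exact min_le_of_left_le hlt
  · refine .of_forall fun x => .of_forall fun y _ _ t h1 => min_le_of_left_le ?_
    exact (ENNReal.inv_le_one.2 (not_le.1 hw).le).trans h1

/-- The hypotheses of the key estimate with their constants fixed: `A` for `(aInc)_1` of
`φ^{1/p}`, `β₀, β₁, β₂` from (A0), (A1)_ω and (A2)_ω with `s = 1`, and `c` from `A_p`. -/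
structure KeyHypotheses {n : ℕ} (Ω : Set (Rn n)) (ω : Rn n → ℝ≥0∞) (φ : Rn n → ℝ≥0∞ → ℝ≥0∞)
    (p : ℝ) (A β₀ β₁ β₂ c Ch : ℝ≥0) (h : Rn n → ℝ≥0) : Prop where
  one_lt : 1 < p
  measurableSet : MeasurableSet Ω
  isWeight : IsWeight ω
  isWeakPhi : IsWeakPhi Ω φ
  one_le_A : 1 ≤ A
  aIncOne : ∀ᵐ x ∂(volume : Measure (Rn n)), x ∈ Ω → AIncOne A fun t => φ x t ^ (1 / p)
  β₀_pos : 0 < β₀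
  a0 : ∀ᵐ x ∂(volume : Measure (Rn n)), x ∈ Ω → φ x β₀ ≤ 1 ∧ 1 ≤ φ x (β₀ : ℝ≥0∞)⁻¹
  β₁_pos : 0 < β₁
  a1 : ∀ (z : Rn n) (r : ℝ), 0 < r →
    ∀ᵐ x ∂(volume : Measure (Rn n)), ∀ᵐ y ∂(volume : Measure (Rn n)),
      x ∈ ball z r ∩ Ω → y ∈ ball z r ∩ Ω → ∀ t : ℝ≥0, 1 ≤ φ y t →
        min (wSet ω (ball z r))⁻¹ (φ x (β₁ * t)) ≤ φ y t
  β₂_pos : 0 < β₂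
  a2 : ∀ᵐ x ∂(volume : Measure (Rn n)), ∀ᵐ y ∂(volume : Measure (Rn n)),
    x ∈ Ω → y ∈ Ω → ∀ t : ℝ≥0, φ y t ≤ 1 → φ x (β₂ * t) ≤ φ y t + h x + h y
  measurable_h : Measurable h
  h_le : ∀ᵐ x ∂(volume : Measure (Rn n)), x ∈ Ω → h x ≤ Ch
  muckenhoupt : ∀ (z : Rn n) (r : ℝ), 0 < r → ∀ S ⊆ ball z r, ∀ G : Rn n → ℝ≥0∞, Measurable G →
    (volume (ball z r))⁻¹ * ∫⁻ y in S, G y ≤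
      c * ((wSet ω (ball z r))⁻¹ * ∫⁻ y in S, G y ^ p * ω y) ^ (1 / p)

theorem exists_keyHypotheses {n : ℕ} {Ω : Set (Rn n)} (hΩ : IsOpen Ω) {φ : Rn n → ℝ≥0∞ → ℝ≥0∞}
    {ω : Rn n → ℝ≥0∞} {p : ℝ} (hp : 1 < p) (hφ : IsWeakPhi Ω φ) (hA0 : A0 Ω φ)
    (hA1 : A1w Ω ω φ) (hA2 : A2w Ω ω φ) (hInc : AInc Ω φ p) (hω : MuckenhouptAq p ω) :
    ∃ (A β₀ β₁ β₂ c Ch : ℝ≥0) (h : Rn n → ℝ≥0),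
      KeyHypotheses Ω ω φ p A β₀ β₁ β₂ c Ch h ∧ MemL1wLinf Ω ω h := by
  obtain ⟨A, hA, hAInc⟩ := hInc.exists_ae_aIncOne (by linarith)
  obtain ⟨β₀, hβ₀, -, hA0⟩ := hA0
  obtain ⟨β₁, hβ₁, hA1⟩ := hA1.exists_ae_min_le
  obtain ⟨β₂, hβ₂, -, h, hh, hA2⟩ := hA2 1 one_pos
  obtain ⟨c, hc⟩ := hω.exists_setLIntegral_le hp
  obtain ⟨hhm, -, Ch, hCh⟩ := id hh
  exact ⟨A, β₀, β₁, β₂, c, Ch, h, ⟨hp, hΩ.measurableSet, hω.1, hφ, hA, hAInc, hβ₀, hA0, hβ₁, hA1,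
    hβ₂, by simpa using hA2, hhm, hCh, hc⟩, hh⟩

namespace KeyHypotheses

variable {n : ℕ} {Ω : Set (Rn n)} {ω : Rn n → ℝ≥0∞} {φ : Rn n → ℝ≥0∞ → ℝ≥0∞} {p : ℝ}
  {A β₀ β₁ β₂ c Ch : ℝ≥0} {h : Rn n → ℝ≥0}

theorem p_pos (H : KeyHypotheses Ω ω φ p A β₀ β₁ β₂ c Ch h) : 0 < p :=
  zero_lt_one.trans H.one_lt

theorem one_div_pos (H : KeyHypotheses Ω ω φ p A β₀ β₁ β₂ c Ch h) : 0 < 1 / p :=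
  _root_.one_div_pos.2 H.p_pos

theorem one_div_le_one (H : KeyHypotheses Ω ω φ p A β₀ β₁ β₂ c Ch h) : 1 / p ≤ 1 := by
  rw [div_le_one H.p_pos]; exact H.one_lt.le

theorem A_ne_zero (H : KeyHypotheses Ω ω φ p A β₀ β₁ β₂ c Ch h) : A ≠ 0 :=
  (zero_lt_one.trans_le H.one_le_A).ne'

theorem ae_monotone_rpow (H : KeyHypotheses Ω ω φ p A β₀ β₁ β₂ c Ch h) :
    ∀ᵐ x ∂(volume : Measure (Rn n)), x ∈ Ω → Monotone fun t => φ x t ^ (1 / p) := by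
  filter_upwards [H.isWeakPhi.mono] with x hx hxΩ s t hst
  exact ENNReal.rpow_le_rpow (hx hxΩ hst) H.one_div_pos.le

theorem ae_rpow_zero (H : KeyHypotheses Ω ω φ p A β₀ β₁ β₂ c Ch h) :
    ∀ᵐ x ∂(volume : Measure (Rn n)), x ∈ Ω → φ x 0 ^ (1 / p) = 0 := by
  filter_upwards [H.isWeakPhi.map_zero] with x hx hxΩ
  rw [hx hxΩ, ENNReal.zero_rpow_of_pos H.one_div_pos]

theorem average_rpow_le_of_subset (H : KeyHypotheses Ω ω φ p A β₀ β₁ β₂ c Ch h) {f : Rn n → ℝ}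
    (hf : Measurable f) (hmod : wModular Ω ω φ (fun x => (‖f x‖₊ : ℝ≥0∞)) ≤ 1) {z : Rn n}
    {r : ℝ} (hr : 0 < r) {S : Set (Rn n)} (hS : S ⊆ ball z r ∩ Ω) :
    (volume (ball z r))⁻¹ * ∫⁻ y in S, φ y ‖f y‖₊ ^ (1 / p) ≤
      c * (wSet ω (ball z r))⁻¹ ^ (1 / p) := by
  have hq := H.one_div_pos.le
  refine (H.muckenhoupt z r hr S (hS.trans inter_subset_left) _
    ((H.isWeakPhi.meas _ hf.nnnorm.coe_nnreal_ennreal).pow_const _)).trans ?_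
  gcongr
  calc (wSet ω (ball z r))⁻¹ * ∫⁻ y in S, (φ y ‖f y‖₊ ^ (1 / p)) ^ p * ω y
      = (wSet ω (ball z r))⁻¹ * ∫⁻ y in S, φ y ‖f y‖₊ * ω y := by
        simp_rw [one_div, ENNReal.rpow_inv_rpow H.p_pos.ne']
    _ ≤ (wSet ω (ball z r))⁻¹ * 1 :=
        mul_le_mul_right ((lintegral_mono_set (hS.trans inter_subset_right)).trans hmod) _
    _ = _ := mul_one _

theorem ae_mul_le_max (H : KeyHypotheses Ω ω φ p A β₀ β₁ β₂ c Ch h) :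
    ∀ᵐ y ∂(volume : Measure (Rn n)), y ∈ Ω → ∀ t : ℝ≥0,
      β₀ * (t : ℝ≥0∞) ≤ A * max 1 (φ y t ^ (1 / p)) := by
  filter_upwards [H.aIncOne, H.a0] with y hy h0 hyΩ t
  exact (hy hyΩ).mul_le_mul_max_one H.one_le_A H.β₀_pos
    (ENNReal.one_le_rpow (h0 hyΩ).2 H.one_div_pos) ENNReal.coe_ne_top

theorem mul_setLIntegral_le_of_one_lt (H : KeyHypotheses Ω ω φ p A β₀ β₁ β₂ c Ch h)
    {f : Rn n → ℝ} (hf : Measurable f) {S : Set (Rn n)} (hS : S ⊆ Ω) :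
    β₀ * ∫⁻ y in S ∩ {y | 1 < φ y ‖f y‖₊}, (‖f y‖₊ : ℝ≥0∞) ≤
      A * ∫⁻ y in S ∩ {y | 1 < φ y ‖f y‖₊}, φ y ‖f y‖₊ ^ (1 / p) := by
  rw [← lintegral_const_mul' _ _ ENNReal.coe_ne_top, ← lintegral_const_mul' _ _ ENNReal.coe_ne_top]
  refine setLIntegral_mono_ae
    (((H.isWeakPhi.meas _ hf.nnnorm.coe_nnreal_ennreal).pow_const _).const_mul _).aemeasurable ?_
  filter_upwards [H.ae_mul_le_max] with y hy hyS
  simpa only [max_eq_right (ENNReal.one_le_rpow hyS.2.le H.one_div_pos)] using hy (hS hyS.1) ‖f y‖₊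

theorem mul_setLIntegral_le_of_le_one (H : KeyHypotheses Ω ω φ p A β₀ β₁ β₂ c Ch h)
    {f : Rn n → ℝ} {S : Set (Rn n)} (hS : S ⊆ Ω) :
    β₀ * ∫⁻ y in S ∩ {y | φ y ‖f y‖₊ ≤ 1}, (‖f y‖₊ : ℝ≥0∞) ≤
      A * volume (S ∩ {y | φ y ‖f y‖₊ ≤ 1}) := by
  rw [← lintegral_const_mul' _ _ ENNReal.coe_ne_top, ← setLIntegral_const]
  refine setLIntegral_mono_ae aemeasurable_const ?_
  filter_upwards [H.ae_mul_le_max] with y hy hyS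
  simpa only [max_eq_left (ENNReal.rpow_le_one hyS.2 H.one_div_pos.le), mul_one]
    using hy (hS hyS.1) ‖f y‖₊

theorem ae_rpow_le_add (H : KeyHypotheses Ω ω φ p A β₀ β₁ β₂ c Ch h) :
    ∀ᵐ x ∂(volume : Measure (Rn n)), ∀ᵐ y ∂(volume : Measure (Rn n)), x ∈ Ω → y ∈ Ω →
      ∀ t : ℝ≥0, φ y t ≤ 1 →
        φ x (β₂ * t) ^ (1 / p) ≤
          φ y t ^ (1 / p) + (h x : ℝ≥0∞) ^ (1 / p) + (h y : ℝ≥0∞) ^ (1 / p) := by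
  have hq := H.one_div_pos.le
  filter_upwards [H.a2] with x hx
  filter_upwards [hx] with y hxy hxΩ hyΩ t ht
  calc φ x (β₂ * t) ^ (1 / p) ≤ (φ y t + h x + h y) ^ (1 / p) :=
        ENNReal.rpow_le_rpow (hxy hxΩ hyΩ t ht) hq
    _ ≤ (φ y t + h x) ^ (1 / p) + (h y : ℝ≥0∞) ^ (1 / p) :=
        ENNReal.rpow_add_le_add_rpow _ _ hq H.one_div_le_one
    _ ≤ _ := by gcongr; exact ENNReal.rpow_add_le_add_rpow _ _ hq H.one_div_le_one

theorem ae_rpow_le_of_frequently (H : KeyHypotheses Ω ω φ p A β₀ β₁ β₂ c Ch h) :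
    ∀ᵐ x ∂(volume : Measure (Rn n)), x ∈ Ω → ∀ t : ℝ≥0,
      (∃ᵐ y ∂(volume : Measure (Rn n)), y ∈ Ω ∧ φ y t < 1) → ∀ τ ≤ (β₂ * t : ℝ≥0∞),
        φ x τ ^ (1 / p) ≤ (1 + Ch ^ (1 / p) : ℝ≥0) + (h x : ℝ≥0∞) ^ (1 / p) := by
  have hq := H.one_div_pos.le
  filter_upwards [H.ae_rpow_le_add, H.ae_monotone_rpow] with x hx hmono hxΩ t hfreq τ hτ
  obtain ⟨y, ⟨hyΩ, hy⟩, hxy, hyC⟩ := (hfreq.and_eventually (hx.and H.h_le)).exists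
  calc φ x τ ^ (1 / p) ≤ φ x (β₂ * t) ^ (1 / p) := hmono hxΩ hτ
    _ ≤ φ y t ^ (1 / p) + (h x : ℝ≥0∞) ^ (1 / p) + (h y : ℝ≥0∞) ^ (1 / p) := hxy hxΩ hyΩ t hy.le
    _ ≤ 1 + (h x : ℝ≥0∞) ^ (1 / p) + (Ch : ℝ≥0∞) ^ (1 / p) := by
        gcongr
        · exact ENNReal.rpow_le_one hy.le hq
        · exact_mod_cast hyC hyΩ
    _ = _ := by rw [ENNReal.coe_add, ENNReal.coe_rpow_of_nonneg _ H.one_div_pos.le]; push_cast; ring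

theorem ae_min_rpow_mul_le (H : KeyHypotheses Ω ω φ p A β₀ β₁ β₂ c Ch h) (z : Rn n) {r : ℝ}
    (hr : 0 < r) :
    ∀ᵐ x ∂(volume : Measure (Rn n)), ∀ᵐ y ∂(volume : Measure (Rn n)),
      x ∈ ball z r ∩ Ω → y ∈ ball z r ∩ Ω → ∀ t : ℝ≥0, 0 < t → 1 ≤ φ y t → ∀ s : ℝ≥0, t < s →
        ∀ τ ≤ (β₁ * t : ℝ≥0∞),
          min ((wSet ω (ball z r))⁻¹ ^ (1 / p)) (φ x τ ^ (1 / p)) * s ≤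
            A * t * φ y s ^ (1 / p) := by
  have hq := H.one_div_pos.le
  filter_upwards [H.a1 z r hr, H.ae_monotone_rpow] with x hx hmono
  filter_upwards [hx, H.aIncOne] with y hxy hy hxB hyB t ht h1 s hts τ hτ
  calc min ((wSet ω (ball z r))⁻¹ ^ (1 / p)) (φ x τ ^ (1 / p)) * s
      ≤ min ((wSet ω (ball z r))⁻¹ ^ (1 / p)) (φ x (β₁ * t) ^ (1 / p)) * s :=
        mul_le_mul_left (min_le_min_left _ (hmono hxB.2 hτ)) _
    _ = min (wSet ω (ball z r))⁻¹ (φ x (β₁ * t)) ^ (1 / p) * s := by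
        rw [(ENNReal.monotone_rpow_of_nonneg hq).map_min]
    _ ≤ φ y t ^ (1 / p) * s := by gcongr; exact hxy hxB hyB t h1
    _ ≤ A * t * φ y s ^ (1 / p) :=
        hy hyB.2 (by exact_mod_cast ht) (by exact_mod_cast hts.le) ENNReal.coe_ne_top

theorem ae_rpow_mul_average_le_of_one_lt (H : KeyHypotheses Ω ω φ p A β₀ β₁ β₂ c Ch h)
    {ε βE : ℝ≥0} (hε : 0 < ε) (hεA : 2 * A * ε ≤ 1) (hεc : 4 * A * c * ε ≤ 1)
    (h0 : A * A * βE ≤ β₀ * β₀) (hC : A * (1 + Ch ^ (1 / p)) * βE ≤ β₀ * β₀) (h1 : βE ≤ β₁ * ε) (h2 : βE ≤ β₂ * ε)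
    {f : Rn n → ℝ} (hf : Measurable f) (hmod : wModular Ω ω φ (fun x => (‖f x‖₊ : ℝ≥0∞)) ≤ 1)
    (z : Rn n) {r : ℝ} (hr : 0 < r) :
    ∀ᵐ x ∂(volume : Measure (Rn n)), x ∈ ball z r ∩ Ω →
      φ x (βE * ((volume (ball z r))⁻¹ *
          ∫⁻ y in ball z r ∩ Ω ∩ {y | 1 < φ y ‖f y‖₊}, ‖f y‖₊)) ^ (1 / p) ≤
        (volume (ball z r))⁻¹ * (∫⁻ y in ball z r ∩ Ω ∩ {y | 1 < φ y ‖f y‖₊}, φ y ‖f y‖₊ ^ (1 / p))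
          + (h x : ℝ≥0∞) ^ (1 / p) := by
  have hF : Measurable fun y => (‖f y‖₊ : ℝ≥0∞) := hf.nnnorm.coe_nnreal_ennreal
  set ν := volume (ball z r)
  set E := ball z r ∩ Ω ∩ {y | 1 < φ y ‖f y‖₊}
  set I := ν⁻¹ * ∫⁻ y in E, (‖f y‖₊ : ℝ≥0∞)
  set K := ν⁻¹ * ∫⁻ y in E, φ y ‖f y‖₊ ^ (1 / p)
  set W := (wSet ω (ball z r))⁻¹ ^ (1 / p)
  have hν0 : ν ≠ 0 := (measure_ball_pos _ _ hr).ne'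
  have hν : ν ≠ ∞ := measure_ball_lt_top.ne
  have hE : MeasurableSet E := (measurableSet_ball.inter H.measurableSet).inter
    (measurableSet_lt measurable_const (H.isWeakPhi.meas _ hF))
  have hW0 : W ≠ 0 := by simp [W, ENNReal.rpow_eq_zero_iff, H.isWeight.2.2 z r hr, H.p_pos.le]
  have hW : W ≠ ∞ := by
    simp [W, ENNReal.rpow_eq_top_iff, H.isWeight.wSet_ball_ne_zero z hr, H.p_pos.le]
  have hK : K ≤ c * W := H.average_rpow_le_of_subset hf hmod hr inter_subset_left
  have hIK : β₀ * I ≤ A * K := by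
    simpa only [I, K, mul_left_comm _ ν⁻¹] using
      mul_le_mul_right (H.mul_setLIntegral_le_of_one_lt hf inter_subset_right) ν⁻¹
  have hfin : ∫⁻ y in E, (‖f y‖₊ : ℝ≥0∞) ≠ ∞ := fun htop => by
    have : β₀ * I = ∞ := by simp [I, htop, hν, H.β₀_pos.ne']
    exact (by finiteness : (A : ℝ≥0∞) * (c * W) ≠ ∞) (top_le_iff.1 (this ▸ hIK.trans (by gcongr)))
  filter_upwards [H.aIncOne, H.a0, H.ae_rpow_zero, H.ae_rpow_le_of_frequently,
    H.ae_min_rpow_mul_le z hr] with x hAx h0x hzx hlo hmid hxB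
  obtain hF0 | hF0 := eq_or_ne (∫⁻ y in E, (‖f y‖₊ : ℝ≥0∞)) 0
  · rw [show I = 0 by simp [I, hF0], mul_zero, hzx hxB.2]
    exact zero_le
  by_cases hτ : (βE : ℝ≥0∞) * I ≤ β₀
  · exact ((hAx hxB.2).apply_le_of_le (hzx hxB.2) H.β₀_pos
      (ENNReal.rpow_le_one (h0x hxB.2).1 H.one_div_pos.le) hτ
      (ENNReal.mul_mul_le_of_mul_le_mul H.A_ne_zero h0 hIK)).trans le_self_add
  obtain ⟨t, ht⟩ : ∃ t : ℝ≥0, (t : ℝ≥0∞) = ε * I := ⟨_, ENNReal.coe_toNNReal (by finiteness)⟩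
  have hτt {β : ℝ≥0} (hβ : βE ≤ β * ε) : (βE : ℝ≥0∞) * I ≤ β * t :=
    calc (βE : ℝ≥0∞) * I ≤ (β * ε : ℝ≥0) * I := by gcongr
      _ = β * t := by rw [ht]; push_cast; ring
  by_cases hlarge : ∀ᵐ y ∂(volume : Measure (Rn n)), y ∈ E → 1 ≤ φ y t
  · have ht0 : 0 < t := by
      rw [← ENNReal.coe_pos, ht]
      exact ENNReal.mul_pos (by exact_mod_cast hε.ne') (mul_ne_zero (ENNReal.inv_ne_zero.2 hν) hF0)
    refine (le_setAverage_of_superlevel_min_le hE hF hν0 hν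
      (measure_mono (inter_subset_left.trans inter_subset_left)) hfin hF0 H.one_le_A hεA hεc hW0 hW
      hK ?_).trans le_self_add
    filter_upwards [ae_restrict_of_ae (hmid.and hlarge), ae_restrict_mem hE] with y hy hyE hlt
    rw [← ht] at hlt ⊢
    exact hy.1 hxB hyE.1 t ht0 (hy.2 hyE) _ (by exact_mod_cast hlt) _ (hτt h1)
  · rw [Filter.not_eventually] at hlarge
    refine (hlo hxB.2 t (hlarge.mono fun y hy => ?_) _ (hτt h2)).trans ?_
    · exact ⟨(Classical.not_imp.1 hy).1.1.2, not_le.1 (Classical.not_imp.1 hy).2⟩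
    gcongr
    exact ENNReal.le_of_lt_mul_of_mul_le H.A_ne_zero H.β₀_pos.ne' (not_le.1 hτ) hIK
      (by exact_mod_cast hC)

theorem ae_rpow_mul_average_le_of_le_one (H : KeyHypotheses Ω ω φ p A β₀ β₁ β₂ c Ch h) {ε βE : ℝ≥0}
    (hε : 2 * A * A * ε ≤ 1) (h2 : βE ≤ β₂ * ε) {f : Rn n → ℝ} (hf : Measurable f) (z : Rn n)
    {r : ℝ} (hr : 0 < r) :
    ∀ᵐ x ∂(volume : Measure (Rn n)), x ∈ ball z r ∩ Ω →
      φ x (βE * ((volume (ball z r))⁻¹ *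
          ∫⁻ y in ball z r ∩ Ω ∩ {y | φ y ‖f y‖₊ ≤ 1}, ‖f y‖₊)) ^ (1 / p) ≤
        (volume (ball z r))⁻¹ * (∫⁻ y in ball z r ∩ Ω ∩ {y | φ y ‖f y‖₊ ≤ 1}, φ y ‖f y‖₊ ^ (1 / p))
          + (h x : ℝ≥0∞) ^ (1 / p) +
          (volume (ball z r))⁻¹ *
            ∫⁻ y in ball z r ∩ Ω ∩ {y | φ y ‖f y‖₊ ≤ 1}, (h y : ℝ≥0∞) ^ (1 / p) := by
  have hF : Measurable fun y => (‖f y‖₊ : ℝ≥0∞) := hf.nnnorm.coe_nnreal_ennreal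
  set ν := volume (ball z r)
  set E := ball z r ∩ Ω ∩ {y | φ y ‖f y‖₊ ≤ 1}
  have hν0 : ν ≠ 0 := (measure_ball_pos _ _ hr).ne'
  have hν : ν ≠ ∞ := measure_ball_lt_top.ne
  have hE : MeasurableSet E := (measurableSet_ball.inter H.measurableSet).inter
    (measurableSet_le (H.isWeakPhi.meas _ hF) measurable_const)
  have hEν : volume E ≤ ν := measure_mono (inter_subset_left.trans inter_subset_left)
  have hfin : ∫⁻ y in E, (β₂ * ‖f y‖₊ : ℝ≥0∞) ≠ ∞ := by
    rw [lintegral_const_mul' _ _ ENNReal.coe_ne_top]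
    refine ENNReal.mul_ne_top ENNReal.coe_ne_top fun htop => ?_
    have := H.mul_setLIntegral_le_of_le_one (f := f) inter_subset_right (S := ball z r ∩ Ω)
    rw [htop, ENNReal.mul_top (by exact_mod_cast H.β₀_pos.ne')] at this
    exact (by finiteness : (A : ℝ≥0∞) * ν ≠ ∞) (top_le_iff.1 (this.trans (by gcongr)))
  filter_upwards [H.aIncOne, H.ae_monotone_rpow, H.ae_rpow_zero, H.ae_rpow_le_add]
    with x hAx hmono hzx hA2 hxB
  calc φ x (βE * (ν⁻¹ * ∫⁻ y in E, ‖f y‖₊)) ^ (1 / p)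
      ≤ φ x (ε * (ν⁻¹ * ∫⁻ y in E, (β₂ * ‖f y‖₊ : ℝ≥0∞))) ^ (1 / p) := by
        refine hmono hxB.2 ?_
        calc (βE : ℝ≥0∞) * (ν⁻¹ * ∫⁻ y in E, ‖f y‖₊)
            ≤ (ε * β₂ : ℝ≥0) * (ν⁻¹ * ∫⁻ y in E, ‖f y‖₊) := by
              gcongr; exact h2.trans_eq (mul_comm _ _)
          _ = _ := by rw [lintegral_const_mul' _ _ ENNReal.coe_ne_top]; push_cast; ring
    _ ≤ ν⁻¹ * ∫⁻ y in E, φ x (β₂ * ‖f y‖₊) ^ (1 / p) :=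
        (hAx hxB.2).apply_mul_setAverage_le (hzx hxB.2) H.one_le_A hε hE (by fun_prop)
          (fun y => by finiteness) hν0 hν hEν hfin
    _ ≤ ν⁻¹ * ∫⁻ y in E,
          (φ y ‖f y‖₊ ^ (1 / p) + (h x : ℝ≥0∞) ^ (1 / p) + (h y : ℝ≥0∞) ^ (1 / p)) := by
        gcongr ν⁻¹ * ?_
        refine setLIntegral_mono_ae' hE ?_
        filter_upwards [hA2] with y hy hyE using hy hxB.2 hyE.1.2 _ hyE.2
    _ = ν⁻¹ * (∫⁻ y in E, φ y ‖f y‖₊ ^ (1 / p)) + ν⁻¹ * ((h x : ℝ≥0∞) ^ (1 / p) * volume E) +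
          ν⁻¹ * ∫⁻ y in E, (h y : ℝ≥0∞) ^ (1 / p) := by
        rw [lintegral_add_right _ (H.measurable_h.coe_nnreal_ennreal.pow_const _),
          lintegral_add_right _ measurable_const, setLIntegral_const, mul_add, mul_add]
    _ ≤ _ := by
        gcongr
        calc ν⁻¹ * ((h x : ℝ≥0∞) ^ (1 / p) * volume E) ≤ ν⁻¹ * ((h x : ℝ≥0∞) ^ (1 / p) * ν) := by
              gcongr
          _ = _ := by rw [mul_left_comm, ENNReal.inv_mul_cancel hν0 hν, mul_one]

theorem exists_key_estimate (H : KeyHypotheses Ω ω φ p A β₀ β₁ β₂ c Ch h) :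
    ∃ β : ℝ≥0, 0 < β ∧ ∀ f : Rn n → ℝ, Measurable f →
      wModular Ω ω φ (fun x => (‖f x‖₊ : ℝ≥0∞)) ≤ 1 → ∀ (z : Rn n) (r : ℝ), 0 < r →
        ∀ᵐ x ∂(volume : Measure (Rn n)), x ∈ ball z r ∩ Ω →
          (φ x ((β : ℝ≥0∞) * (volume (ball z r))⁻¹ *
              ∫⁻ y in ball z r ∩ Ω, (‖f y‖₊ : ℝ≥0∞))) ^ (1 / p) ≤
            (volume (ball z r))⁻¹ * (∫⁻ y in ball z r ∩ Ω, (φ y (‖f y‖₊ : ℝ≥0∞)) ^ (1 / p)) +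
              (h x : ℝ≥0∞) ^ (1 / p) +
              (volume (ball z r))⁻¹ * ∫⁻ y in ball z r ∩ Ω, (h y : ℝ≥0∞) ^ (1 / p) := by
  obtain ⟨ε, βE, hε, hβE, hεA, hεAA, hεc, h0, hC, h1, h2⟩ := exists_key_constants (c := c)
    (C := Ch ^ (1 / p)) H.one_le_A H.β₀_pos H.β₁_pos H.β₂_pos
  refine ⟨βE / 2, by positivity, fun f hf hmod z r hr => ?_⟩
  have hD (g : Rn n → ℝ≥0∞) : ∫⁻ y in ball z r ∩ Ω, g y =
      (∫⁻ y in ball z r ∩ Ω ∩ {y | 1 < φ y ‖f y‖₊}, g y) +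
        ∫⁻ y in ball z r ∩ Ω ∩ {y | φ y ‖f y‖₊ ≤ 1}, g y := by
    rw [← lintegral_inter_add_sdiff _ _
      (measurableSet_lt measurable_const (H.isWeakPhi.meas _ hf.nnnorm.coe_nnreal_ennreal))]
    congr 3
    ext y; simp [not_lt]
  filter_upwards [H.ae_rpow_mul_average_le_of_one_lt hε hεA hεc h0 hC h1 h2 hf hmod z hr,
    H.ae_rpow_mul_average_le_of_le_one hεAA h2 hf z hr, H.ae_monotone_rpow]
    with x hlarge hsmall hmono hx
  rw [hD, hD, hD, ENNReal.coe_div two_ne_zero, mul_assoc, mul_add]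
  refine ((hmono hx.2).apply_div_two_mul_add_le_max _ _ _).trans
    (max_le ((hlarge hx).trans ?_) ((hsmall hx).trans ?_))
  all_goals rw [mul_add, mul_add]
  · exact le_add_right (add_le_add_left le_self_add _)
  · exact add_le_add (add_le_add_left le_add_self _) le_add_self

end KeyHypotheses

/-- The weighted key estimate. -/
theorem weighted_key_estimate
    (n : ℕ) (Ω : Set (Rn n)) (hΩ : IsOpen Ω)
    (φ : Rn n → ℝ≥0∞ → ℝ≥0∞) (ω : Rn n → ℝ≥0∞) (p : ℝ) (hp1 : 1 < p)
    (hφ : IsWeakPhi Ω φ) (hA0 : A0 Ω φ) (hA1 : A1w Ω ω φ) (hA2 : A2w Ω ω φ)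
    (hInc : AInc Ω φ p) (hω : MuckenhouptAq p ω) :
    ∃ β : ℝ≥0, 0 < β ∧ ∃ h : Rn n → ℝ≥0, MemL1wLinf Ω ω h ∧
      ∀ f : Rn n → ℝ, Measurable f →
        wModular Ω ω φ (fun x => (‖f x‖₊ : ℝ≥0∞)) ≤ 1 →
          ∀ (z : Rn n) (r : ℝ), 0 < r →
            ∀ᵐ x ∂(volume : Measure (Rn n)), x ∈ ball z r ∩ Ω →
              (φ x ((β : ℝ≥0∞) * (volume (ball z r))⁻¹ *
                  ∫⁻ y in ball z r ∩ Ω, (‖f y‖₊ : ℝ≥0∞))) ^ (1 / p) ≤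
                (volume (ball z r))⁻¹ *
                    (∫⁻ y in ball z r ∩ Ω, (φ y (‖f y‖₊ : ℝ≥0∞)) ^ (1 / p)) +
                  (h x : ℝ≥0∞) ^ (1 / p) +
                  (volume (ball z r))⁻¹ *
                    ∫⁻ y in ball z r ∩ Ω, (h y : ℝ≥0∞) ^ (1 / p) := by
  obtain ⟨A, β₀, β₁, β₂, c, Ch, h, H, hh⟩ :=
    exists_keyHypotheses hΩ hp1 hφ hA0 hA1 hA2 hInc hω
  obtain ⟨β, hβ, hkey⟩ := H.exists_key_estimate
  exact ⟨β, hβ, h, hh, hkey⟩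
end
end

section
/- Let Ω ⊆ ℝⁿ be open, let ω ∈ A_∞, and let φ(x,t) = t^{p(x)} where p : Ω → [1,∞] is measurable with 1/p ∈ P^log(Ω). Then φ satisfies (A1)_ω: there exists β₁ ∈ (0,1] such that φ(x,β₁t) ≤ φ(y,t) whenever φ(y,t) ∈ [1, 1/ω(B)], for a.e. x,y ∈ B∩Ω and every ball B with ω(B) ≤ 1. -/
open MeasureTheory Metric Filter Set
open scoped ENNReal NNReal Topology

noncomputable section

/-!
Write `B = B(z,r)`, `u = φ(y,t) ∈ [1, 1/ω(B)]` and `δ = (1/p(y) - 1/p(x))₊`. Since `t = u^{1/p(y)}`,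
the inequality `φ(x, βt) ≤ u` reduces to `β u^{1/p(y)} ≤ u^{1/p(x)}`, which holds once
`β ≤ ω(B)^δ`. Hölder's inequality turns the `A_q` condition into the lower bound
`ω(B) ≥ K (r/(|z|+r+1))^{nq}` (compare `B` with `B(z,|z|+r+1) ⊇ B(0,1)`), and log-Hölder continuity
and decay of `1/p` give `δ log((|z|+r+1)/r) ≤ c`. So `ω(B)^δ ≥ exp(min(log K, 0) - nqc) =: β`.
-/

open Real

section Muckenhoupt

variable {α : Type*} [MeasurableSpace α] {μ : Measure α} {ω : α → ℝ≥0∞} {q : ℝ}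

-- Hölder's inequality for `1 = ω^{1/q} ω^{-1/q}` with exponents `q` and `q/(q-1)`.
lemma measure_rpow_le_lintegral_mul_lintegral_rpow (hq : 1 < q) (hω : AEMeasurable ω μ)
    (hω0 : ∀ᵐ x ∂μ, ω x ≠ 0 ∧ ω x ≠ ∞) (A : Set α) :
    μ A ^ q ≤ (∫⁻ x in A, ω x ∂μ) * (∫⁻ x in A, ω x ^ (-(1 / (q - 1))) ∂μ) ^ (q - 1) := by
  have hq0 : 0 < q := one_pos.trans hq
  have hpq : q.HolderConjugate (q / (q - 1)) := Real.HolderConjugate.conjExponent hq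
  have hone : μ A = ∫⁻ x in A, ω x ^ (1 / q) * ω x ^ (-(1 / q)) ∂μ := by
    rw [← setLIntegral_one]
    refine lintegral_congr_ae (ae_restrict_of_ae (hω0.mono fun x hx => ?_))
    dsimp only
    rw [← ENNReal.rpow_add _ _ hx.1 hx.2, add_neg_cancel, ENNReal.rpow_zero]
  have holder := ENNReal.lintegral_mul_le_Lp_mul_Lq (μ.restrict A) hpq
    (hω.pow_const (1 / q)).restrict (hω.pow_const (-(1 / q))).restrict
  simp only [Pi.mul_apply, ← ENNReal.rpow_mul, one_div_mul_cancel hq0.ne', ENNReal.rpow_one]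
    at holder
  rw [show -(1 / q) * (q / (q - 1)) = -(1 / (q - 1)) by field_simp, ← hone,
    show 1 / (q / (q - 1)) = (q - 1) / q by rw [one_div_div]] at holder
  calc μ A ^ q ≤ ((∫⁻ x in A, ω x ∂μ) ^ (1 / q) *
        (∫⁻ x in A, ω x ^ (-(1 / (q - 1))) ∂μ) ^ ((q - 1) / q)) ^ q :=
        ENNReal.rpow_le_rpow holder hq0.le
    _ = _ := by
        rw [ENNReal.mul_rpow_of_nonneg _ _ hq0.le, ← ENNReal.rpow_mul, ← ENNReal.rpow_mul,
          one_div_mul_cancel hq0.ne', ENNReal.rpow_one, div_mul_cancel₀ _ hq0.ne']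

lemma measure_rpow_mul_lintegral_le (hq : 1 < q) (hω : AEMeasurable ω μ)
    (hω0 : ∀ᵐ x ∂μ, ω x ≠ 0 ∧ ω x ≠ ∞) {A A' : Set α} (hAA' : A ⊆ A') (h0 : μ A' ≠ 0)
    (htop : μ A' ≠ ∞) {C : ℝ≥0∞}
    (hC : μ A' ^ (-q) * (∫⁻ x in A', ω x ∂μ) *
      (∫⁻ x in A', ω x ^ (-(1 / (q - 1))) ∂μ) ^ (q - 1) ≤ C) :
    μ A ^ q * ∫⁻ x in A', ω x ∂μ ≤ C * μ A' ^ q * ∫⁻ x in A, ω x ∂μ := by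
  set σ := fun s : Set α => ∫⁻ x in s, ω x ^ (-(1 / (q - 1))) ∂μ
  have hσ : σ A ^ (q - 1) ≤ σ A' ^ (q - 1) :=
    ENNReal.rpow_le_rpow (lintegral_mono_set hAA') (sub_pos.2 hq).le
  have hC' : (∫⁻ x in A', ω x ∂μ) * σ A' ^ (q - 1) ≤ C * μ A' ^ q := by
    calc (∫⁻ x in A', ω x ∂μ) * σ A' ^ (q - 1)
        = μ A' ^ (-q) * (∫⁻ x in A', ω x ∂μ) * σ A' ^ (q - 1) * μ A' ^ q := by
          rw [mul_comm _ (μ A' ^ q), ← mul_assoc, ← mul_assoc, ← ENNReal.rpow_add _ _ h0 htop,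
            add_neg_cancel, ENNReal.rpow_zero, one_mul]
      _ ≤ C * μ A' ^ q := mul_le_mul_left hC _
  calc μ A ^ q * ∫⁻ x in A', ω x ∂μ
      ≤ (∫⁻ x in A, ω x ∂μ) * σ A' ^ (q - 1) * ∫⁻ x in A', ω x ∂μ :=
        mul_le_mul_left ((measure_rpow_le_lintegral_mul_lintegral_rpow hq hω hω0 A).trans
          (mul_le_mul_right hσ _)) _
    _ = (∫⁻ x in A, ω x ∂μ) * ((∫⁻ x in A', ω x ∂μ) * σ A' ^ (q - 1)) := by ring
    _ ≤ (∫⁻ x in A, ω x ∂μ) * (C * μ A' ^ q) := mul_le_mul_right hC' _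
    _ = C * μ A' ^ q * ∫⁻ x in A, ω x ∂μ := by ring

end Muckenhoupt

lemma MeasureTheory.Measure.addHaar_ball_eq_ofReal_div_pow_mul {E : Type*} [NormedAddCommGroup E]
    [NormedSpace ℝ E] [MeasurableSpace E] [BorelSpace E] [FiniteDimensional ℝ E]
    (μ : Measure E) [μ.IsAddHaarMeasure] (z : E) {r R : ℝ} (hr : 0 < r) (hR : 0 < R) :
    μ (ball z r) = ENNReal.ofReal ((r / R) ^ Module.finrank ℝ E) * μ (ball z R) := by
  rw [Measure.addHaar_ball_of_pos μ z hr, Measure.addHaar_ball_of_pos μ z hR, ← mul_assoc,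
    ← ENNReal.ofReal_mul (by positivity), div_pow, div_mul_cancel₀ _ (by positivity)]

lemma IsWeight.wSet_ball_pos {n : ℕ} {ω : Rn n → ℝ≥0∞} (hω : IsWeight ω) (z : Rn n) {r : ℝ}
    (hr : 0 < r) : 0 < wSet ω (ball z r) := by
  rw [wSet, setLIntegral_pos_iff hω.1, inter_comm, measure_inter_conull]
  · exact measure_ball_pos volume z hr
  · refine measure_mono_null (fun x hx => ?_) (ae_iff.1 hω.2.1)
    simp_all

lemma MuckenhouptAq.exists_pos_mul_rpow_le_wSet_ball {n : ℕ} {q : ℝ} {ω : Rn n → ℝ≥0∞}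
    (hq : 1 < q) (hω : MuckenhouptAq q ω) :
    ∃ K > 0, ∀ (z : Rn n) (r : ℝ), 0 < r →
      K * (r / (‖z‖ + r + 1)) ^ ((n : ℝ) * q) ≤ (wSet ω (ball z r)).toReal := by
  obtain ⟨hw, C, hCtop, hC⟩ := hω
  have hw0 : ∀ᵐ x, ω x ≠ 0 ∧ ω x ≠ ∞ := hw.2.1.mono fun x hx => ⟨hx.1.ne', hx.2.ne⟩
  set c₀ := wSet ω (ball 0 1)
  have hc₀ : 0 < c₀.toReal :=
    ENNReal.toReal_pos (hw.wSet_ball_pos 0 one_pos).ne' (hw.2.2 0 1 one_pos)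
  -- `C + 1` rather than `C`, which is not known to be positive.
  refine ⟨c₀.toReal / (C.toReal + 1), by positivity, fun z r hr => ?_⟩
  set R := ‖z‖ + r + 1
  have hR : 0 < R := by positivity
  have hrR : r ≤ R := by linarith [norm_nonneg z]
  have hc₀R : c₀ ≤ wSet ω (ball z R) :=
    lintegral_mono_set (ball_subset_ball' (by rw [dist_zero_left]; linarith))
  have hV0 : volume (ball z R) ^ q ≠ 0 :=
    (ENNReal.rpow_pos (measure_ball_pos volume z hR) measure_ball_lt_top.ne).ne'
  have hVtop : volume (ball z R) ^ q ≠ ∞ :=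
    ENNReal.rpow_ne_top_of_nonneg (by linarith) measure_ball_lt_top.ne
  have key : ENNReal.ofReal ((r / R) ^ ((n : ℝ) * q)) * c₀ ≤ C * wSet ω (ball z r) := by
    have hcmp : volume (ball z r) ^ q * wSet ω (ball z R) ≤
        C * volume (ball z R) ^ q * wSet ω (ball z r) :=
      measure_rpow_mul_lintegral_le hq hw.1.aemeasurable hw0 (ball_subset_ball hrR)
        (measure_ball_pos volume z hR).ne' measure_ball_lt_top.ne (hC z R hR)
    rw [Measure.addHaar_ball_eq_ofReal_div_pow_mul volume z hr hR, finrank_euclideanSpace_fin,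
      ENNReal.mul_rpow_of_nonneg _ _ (by linarith), ENNReal.ofReal_rpow_of_nonneg (by positivity)
      (by linarith), ← Real.rpow_natCast, ← Real.rpow_mul (by positivity)] at hcmp
    rw [← ENNReal.mul_le_mul_iff_left hV0 hVtop]
    calc ENNReal.ofReal ((r / R) ^ ((n : ℝ) * q)) * c₀ * volume (ball z R) ^ q
        ≤ ENNReal.ofReal ((r / R) ^ ((n : ℝ) * q)) * volume (ball z R) ^ q * wSet ω (ball z R) := by
          rw [mul_right_comm]; gcongr
      _ ≤ C * volume (ball z R) ^ q * wSet ω (ball z r) := hcmp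
      _ = C * wSet ω (ball z r) * volume (ball z R) ^ q := by ring
  have hreal := ENNReal.toReal_mono (ENNReal.mul_ne_top hCtop (hw.2.2 z r hr)) key
  rw [ENNReal.toReal_mul, ENNReal.toReal_mul, ENNReal.toReal_ofReal (by positivity)] at hreal
  rw [div_mul_eq_mul_div, div_le_iff₀ (by positivity)]
  nlinarith [ENNReal.toReal_nonneg (a := wSet ω (ball z r))]

lemma log_exp_one_add_pos {u : ℝ} (hu : 0 ≤ u) : 0 < log (exp 1 + u) :=
  log_pos (by linarith [add_one_le_exp 1])

lemma log_div_le_two_mul_log_add_log {s r ρ : ℝ} (hs : 0 ≤ s) (hr : 0 < r) (hρ : 0 ≤ ρ)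
    (hsρ : s ≤ ρ + r) :
    log ((s + r + 1) / r) ≤ 2 * log (exp 1 + 1 / (2 * r)) + log (exp 1 + ρ) := by
  have he : 2 < exp 1 := by have := exp_one_gt_d9; linarith
  have hsq : (s + r + 1) / r ≤ (2 + 1 / r) * (1 + ρ) := by
    rw [div_le_iff₀ hr]
    have : r * (2 + 1 / r) = 2 * r + 1 := by field_simp
    nlinarith
  have hsq' : 2 + 1 / r ≤ (exp 1 + 1 / (2 * r)) ^ 2 := by
    have h : 1 / r = 2 * (1 / (2 * r)) := by field_simp
    have h0 : 0 < 1 / (2 * r) := by positivity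
    rw [h]; nlinarith
  rw [show 2 * log (exp 1 + 1 / (2 * r)) = log ((exp 1 + 1 / (2 * r)) ^ 2) by simp [log_pow],
    ← log_mul (by positivity) (by positivity)]
  refine log_le_log (by positivity) (hsq.trans ?_)
  exact mul_le_mul hsq' (by linarith) (by positivity) (by positivity)

lemma LocallyLogHolder.exists_mul_log_le {n : ℕ} {Ω : Set (Rn n)} {g : Rn n → ℝ}
    (h : LocallyLogHolder Ω g) :
    ∃ c > 0, ∀ x ∈ Ω, ∀ y ∈ Ω, ∀ ρ > 0, dist x y ≤ ρ → |g x - g y| * log (exp 1 + 1 / ρ) ≤ c := by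
  obtain ⟨c, hc, hg⟩ := h
  refine ⟨c, hc, fun x hx y hy ρ hρ hxy => ?_⟩
  rcases eq_or_ne x y with rfl | hne
  · simpa using hc.le
  have hd : 0 < dist x y := dist_pos.2 hne
  calc |g x - g y| * log (exp 1 + 1 / ρ) ≤ |g x - g y| * log (exp 1 + 1 / dist x y) := by
        gcongr
    _ ≤ c := (le_div_iff₀ (log_exp_one_add_pos (by positivity))).1 (hg x hx y hy)

lemma LogHolderDecay.exists_mul_log_le {n : ℕ} {Ω : Set (Rn n)} {g : Rn n → ℝ} {ginf : ℝ}
    (h : LogHolderDecay Ω g ginf) :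
    ∃ c > 0, ∀ x ∈ Ω, ∀ y ∈ Ω, ∀ ρ ≥ 0, ρ ≤ ‖x‖ → ρ ≤ ‖y‖ → |g x - g y| * log (exp 1 + ρ) ≤ c := by
  obtain ⟨c, hc, hg⟩ := h
  refine ⟨2 * c, by positivity, fun x hx y hy ρ hρ hρx hρy => ?_⟩
  have hL := log_exp_one_add_pos hρ
  have decay : ∀ v ∈ Ω, ρ ≤ ‖v‖ → |g v - ginf| * log (exp 1 + ρ) ≤ c := fun v hv hρv =>
    calc |g v - ginf| * log (exp 1 + ρ) ≤ |g v - ginf| * log (exp 1 + ‖v‖) := by gcongr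
      _ ≤ c := (le_div_iff₀ (log_exp_one_add_pos (norm_nonneg v))).1 (hg v hv)
  calc |g x - g y| * log (exp 1 + ρ)
      ≤ (|g x - ginf| + |g y - ginf|) * log (exp 1 + ρ) := by
        gcongr; exact (abs_sub_le _ ginf _).trans_eq (by rw [abs_sub_comm ginf])
    _ ≤ 2 * c := by linarith [decay x hx hρx, decay y hy hρy]

lemma exists_abs_sub_mul_log_le_of_logHolder {n : ℕ} {Ω : Set (Rn n)} {g : Rn n → ℝ}
    {ginf : ℝ} (hloc : LocallyLogHolder Ω g) (hdec : LogHolderDecay Ω g ginf) :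
    ∃ c > 0, ∀ (z : Rn n) (r : ℝ), 0 < r → ∀ x ∈ ball z r ∩ Ω, ∀ y ∈ ball z r ∩ Ω,
      |g x - g y| * log ((‖z‖ + r + 1) / r) ≤ c := by
  obtain ⟨c₁, hc₁0, hc₁⟩ := hloc.exists_mul_log_le
  obtain ⟨c₂, hc₂0, hc₂⟩ := hdec.exists_mul_log_le
  refine ⟨2 * c₁ + c₂, by positivity, fun z r hr x ⟨hxB, hx⟩ y ⟨hyB, hy⟩ => ?_⟩
  rw [mem_ball] at hxB hyB
  set ρ := max (‖z‖ - r) 0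
  have hnorm : ∀ v : Rn n, dist v z < r → ρ ≤ ‖v‖ := fun v hv =>
    max_le (by linarith [norm_sub_norm_le z v, dist_eq_norm z v, dist_comm v z]) (norm_nonneg v)
  have hxy : dist x y ≤ 2 * r := by linarith [dist_triangle_right x y z]
  calc |g x - g y| * log ((‖z‖ + r + 1) / r)
      ≤ |g x - g y| * (2 * log (exp 1 + 1 / (2 * r)) + log (exp 1 + ρ)) := by
        gcongr
        exact log_div_le_two_mul_log_add_log (norm_nonneg z) hr (le_max_right _ _)
          (by linarith [le_max_left (‖z‖ - r) 0])
    _ = 2 * (|g x - g y| * log (exp 1 + 1 / (2 * r))) + |g x - g y| * log (exp 1 + ρ) := by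
        ring
    _ ≤ 2 * c₁ + c₂ := by
        gcongr
        · exact hc₁ x hx y hy (2 * r) (by positivity) hxy
        · exact hc₂ x hx y hy ρ (le_max_right _ _) (hnorm x hxB) (hnorm y hyB)

lemma exp_le_rpow_of_mul_rpow_le {K s e δ w c : ℝ} (hK : 0 < K) (hs : 0 < s) (he : 0 ≤ e)
    (hδ0 : 0 ≤ δ) (hδ1 : δ ≤ 1) (hw : K * s ^ e ≤ w) (hc : δ * log s⁻¹ ≤ c) :
    exp (min (log K) 0 - e * c) ≤ w ^ δ := by
  have hw0 : 0 < w := lt_of_lt_of_le (by positivity) hw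
  have hlogw : log K + e * log s ≤ log w := by
    rw [← log_rpow hs, ← log_mul hK.ne' (by positivity)]
    exact log_le_log (by positivity) hw
  have hδK : min (log K) 0 ≤ δ * log K := by
    rcases le_total 0 (log K) with h | h
    · exact (min_le_right _ _).trans (by positivity)
    · exact (min_le_left _ _).trans (by nlinarith)
  rw [rpow_def_of_pos hw0]
  refine exp_le_exp.2 ?_
  rw [log_inv] at hc
  nlinarith [mul_le_mul_of_nonneg_left hlogw hδ0, mul_le_mul_of_nonneg_left hc he]

lemma invExp_le_one {n : ℕ} {p : Rn n → ℝ≥0∞} {x : Rn n} (h : 1 ≤ p x) : invExp p x ≤ 1 :=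
  ENNReal.toReal_le_of_le_ofReal zero_le_one (by simpa using ENNReal.inv_le_one.2 h)

namespace ENNReal

lemma mul_rpow_le_rpow {W u β : ℝ≥0∞} {a b : ℝ} (hW : W ≠ 0) (hu : 1 ≤ u) (huW : u ≤ W⁻¹)
    (hβ : β ≤ W ^ max (a - b) 0) : β * u ^ a ≤ u ^ b := by
  have hu0 : u ≠ 0 := (zero_lt_one.trans_le hu).ne'
  have hutop : u ≠ ∞ := ne_top_of_le_ne_top (inv_ne_top.2 hW) huW
  rcases le_or_gt a b with hab | hba
  · have hβ1 : β ≤ 1 := by simpa [max_eq_right (sub_nonpos.2 hab)] using hβ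
    calc β * u ^ a ≤ 1 * u ^ b := mul_le_mul' hβ1 (rpow_le_rpow_of_exponent_le hu hab)
      _ = u ^ b := one_mul _
  · have hWu : W ≤ u⁻¹ := le_inv_iff_le_inv.1 huW
    calc β * u ^ a ≤ u⁻¹ ^ (a - b) * u ^ a := by
          rw [max_eq_left (sub_nonneg.2 hba.le)] at hβ
          exact mul_le_mul_left (hβ.trans (rpow_le_rpow hWu (sub_nonneg.2 hba.le))) _
      _ = u ^ b := by
          rw [inv_rpow, ← rpow_neg, ← rpow_add _ _ hu0 hutop]
          ring_nf

end ENNReal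

lemma varExp_le_of_le_rpow_invExp {n : ℕ} {p : Rn n → ℝ≥0∞} {x : Rn n} (hx : p x ≠ 0)
    {s u : ℝ≥0∞} (h : s ≤ u ^ invExp p x) : varExp p x s ≤ u := by
  unfold varExp invExp at *
  by_cases hxtop : p x = ∞
  · simp_all
  · rw [if_neg hxtop, ENNReal.toReal_inv] at *
    calc s ^ (p x).toReal ≤ (u ^ (p x).toReal⁻¹) ^ (p x).toReal :=
          ENNReal.rpow_le_rpow h ENNReal.toReal_nonneg
      _ = u := ENNReal.rpow_inv_rpow (ENNReal.toReal_ne_zero.2 ⟨hx, hxtop⟩) u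

lemma varExp_mul_le {n : ℕ} {p : Rn n → ℝ≥0∞} {x y : Rn n} (hx : p x ≠ 0) (hy : p y ≠ 0)
    {W β t : ℝ≥0∞} (hW : W ≠ 0) (h1 : 1 ≤ varExp p y t) (h2 : varExp p y t ≤ W⁻¹)
    (hβ : β ≤ W ^ max (invExp p y - invExp p x) 0) :
    varExp p x (β * t) ≤ varExp p y t := by
  have hytop : p y ≠ ∞ := by
    intro hytop
    simp only [varExp, hytop, if_true] at h1 h2
    split_ifs at h1 h2 with ht
    · exact absurd h1 (by simp)
    · exact hW (ENNReal.inv_eq_top.1 (top_le_iff.1 h2))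
  have ht : t = varExp p y t ^ invExp p y := by
    rw [varExp, if_neg hytop, invExp, ENNReal.toReal_inv,
      ENNReal.rpow_rpow_inv (ENNReal.toReal_ne_zero.2 ⟨hy, hytop⟩)]
  apply varExp_le_of_le_rpow_invExp hx
  conv_lhs => rw [ht]
  exact ENNReal.mul_rpow_le_rpow hW h1 h2 hβ

theorem varExp_A1w_general
    (n : ℕ) (Ω : Set (Rn n))
    (ω : Rn n → ℝ≥0∞) (hω : MuckenhouptAinfty ω)
    (p : Rn n → ℝ≥0∞) (hp1 : ∀ x ∈ Ω, 1 ≤ p x)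
    (hlog : PLog Ω p) :
    A1w Ω ω (varExp p) := by
  obtain ⟨q, hq, hAq⟩ := hω
  obtain ⟨K, hK, hwK⟩ := hAq.exists_pos_mul_rpow_le_wSet_ball hq
  obtain ⟨hloc, _, -, hdec⟩ := hlog
  obtain ⟨c, hc0, hc⟩ := exists_abs_sub_mul_log_le_of_logHolder hloc hdec
  set β := exp (min (log K) 0 - n * q * c)
  have hβ1 : β ≤ 1 := exp_le_one_iff.2 <| by
    have : 0 ≤ n * q * c := by positivity
    linarith [min_le_right (log K) 0]
  refine ⟨β.toNNReal, toNNReal_pos.2 (exp_pos _), toNNReal_le_one.2 hβ1,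
    fun z r hr _ => .of_forall fun x => .of_forall fun y => ?_⟩
  rintro ⟨hxB, hx⟩ ⟨hyB, hy⟩ t h1 h2
  have hp0 : ∀ v ∈ Ω, p v ≠ 0 := fun v hv => (zero_lt_one.trans_le (hp1 v hv)).ne'
  have hW := hAq.1.wSet_ball_pos z hr
  have hWtop := hAq.1.2.2 z r hr
  refine varExp_mul_le (hp0 x hx) (hp0 y hy) hW.ne' h1 h2 ?_
  set δ := max (invExp p y - invExp p x) 0
  have hδ : δ * log (r / (‖z‖ + r + 1))⁻¹ ≤ c := by
    refine le_trans ?_ (hc z r hr x ⟨hxB, hx⟩ y ⟨hyB, hy⟩)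
    rw [inv_div]
    refine mul_le_mul_of_nonneg_right (max_le ?_ (abs_nonneg _)) ?_
    · exact (le_abs_self _).trans_eq (abs_sub_comm _ _)
    · exact log_nonneg ((one_le_div hr).2 (by linarith [norm_nonneg z]))
  have hδ1 : δ ≤ 1 := by
    have : 0 ≤ invExp p x := ENNReal.toReal_nonneg
    exact max_le (by linarith [invExp_le_one (hp1 y hy)]) zero_le_one
  rw [← ENNReal.ofReal_toReal hWtop, ENNReal.ofReal_rpow_of_pos (ENNReal.toReal_pos hW.ne' hWtop)]
  exact ENNReal.ofReal_le_ofReal (exp_le_rpow_of_mul_rpow_le hK (by positivity) (by positivity)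
    (le_max_right _ _) hδ1 (hwK z r hr) hδ)

/-- The variable exponent functional satisfies (A1)_ω. -/
theorem varExp_A1w
    (n : ℕ) (Ω : Set (Rn n)) (hΩ : IsOpen Ω)
    (ω : Rn n → ℝ≥0∞) (hω : MuckenhouptAinfty ω)
    (p : Rn n → ℝ≥0∞) (hpm : Measurable p) (hp1 : ∀ x ∈ Ω, 1 ≤ p x)
    (hlog : PLog Ω p) :
    A1w Ω ω (varExp p) :=
  varExp_A1w_general n Ω ω hω p hp1 hlog
end
end

section
/- (Weighted Nekvinda decay condition.) Let Ω ⊆ ℝⁿ be open, let ω ∈ A_∞, and let p : Ω → [1,∞] be measurable such that 1/p satisfies the log-Hölder decay condition with limit p_∞ ∈ [1,∞]. Then there exists λ ∈ (0,1) such that ∫_Ω λ^{1/|1/p(x) − 1/p_∞|} ω(x) dx < ∞, where the integrand is interpreted as 0 at points with 1/p(x) = 1/p_∞. -/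
open MeasureTheory Metric Filter Set
open scoped ENNReal NNReal Topology

noncomputable section

theorem growth {n : ℕ} {q : ℝ} (hq : 1 < q) {ω : Rn n → ℝ≥0∞}
    (hAq : MuckenhouptAq q ω) :
    ∃ K : ℝ≥0∞, K ≠ ∞ ∧ ∀ R : ℝ, 1 ≤ R →
      wSet ω (ball (0 : Rn n) R) ≤ K * (ENNReal.ofReal (R ^ n)) ^ q := by
  obtain ⟨⟨hmeas, hae, hfin⟩, C, hC, hCb⟩ := hAq
  rcases Nat.eq_zero_or_pos n with hn | hn
  · subst hn
    refine ⟨wSet ω (ball (0 : Rn 0) 1), hfin _ _ one_pos, fun R hR => ?_⟩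
    have hsub : ball (0 : Rn 0) R ⊆ ball (0 : Rn 0) 1 := by
      intro x _
      have : x = 0 := Subsingleton.elim x 0
      simp [mem_ball, this]
    calc wSet ω (ball (0 : Rn 0) R) ≤ wSet ω (ball (0 : Rn 0) 1) :=
          lintegral_mono_set hsub
      _ = wSet ω (ball (0 : Rn 0) 1) * (ENNReal.ofReal (R ^ 0)) ^ q := by
          simp [ENNReal.one_rpow]
  haveI : Nonempty (Fin n) := ⟨⟨0, hn⟩⟩
  haveI : Nontrivial (Rn n) := inferInstance
  have hq0 : q ≠ 0 := by positivity
  have hq1 : q - 1 ≠ 0 := sub_ne_zero.2 hq.ne'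
  set A : ℝ≥0∞ := wSet ω (ball (0 : Rn n) 1) with hA
  set V1 : ℝ≥0∞ := volume (ball (0 : Rn n) 1) with hV1
  have hV1pos : V1 ≠ 0 := (measure_ball_pos _ _ one_pos).ne'
  have hV1fin : V1 ≠ ∞ := measure_ball_lt_top.ne
  refine ⟨A * C, ENNReal.mul_ne_top (hfin _ _ one_pos) hC, fun R hR => ?_⟩
  have hRpos : (0:ℝ) < R := lt_of_lt_of_le one_pos hR
  set q' : ℝ := q / (q - 1) with hq'
  have hpq : q.HolderConjugate q' := Real.HolderConjugate.conjExponent hq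
  set I : ℝ≥0∞ := ∫⁻ y in ball (0:Rn n) R, (ω y) ^ (-(1 / (q - 1))) with hI
  -- Hölder on B1
  have hol : V1 ≤ A ^ (1/q) * I ^ (1/q') := by
    have h1 : V1 = ∫⁻ y in ball (0:Rn n) 1,
        ((fun y => ω y ^ (1/q)) * fun y => ω y ^ (-(1/q))) y := by
      rw [show V1 = ∫⁻ _ in ball (0:Rn n) 1, (1:ℝ≥0∞) from (setLIntegral_one _).symm]
      refine lintegral_congr_ae ((ae_restrict_of_ae hae).mono fun y hy => ?_)
      simp only [Pi.mul_apply]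
      rw [← ENNReal.rpow_add _ _ hy.1.ne' hy.2.ne]
      norm_num
    rw [h1]
    have hm1 : Measurable fun y => ω y ^ (1/q) :=
      ENNReal.continuous_rpow_const.measurable.comp hmeas
    have hm2 : Measurable fun y => ω y ^ (-(1/q)) :=
      ENNReal.continuous_rpow_const.measurable.comp hmeas
    have := ENNReal.lintegral_mul_le_Lp_mul_Lq
      (volume.restrict (ball (0:Rn n) 1)) hpq hm1.aemeasurable hm2.aemeasurable
    refine this.trans (mul_le_mul' (le_of_eq ?_) ?_)
    · congr 1
      refine lintegral_congr fun y => ?_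
      simp only [← ENNReal.rpow_mul]
      rw [one_div_mul_cancel hq0, ENNReal.rpow_one]
    · calc (∫⁻ y in ball (0:Rn n) 1, (fun y => ω y ^ (-(1/q))) y ^ q') ^ (1/q')
          = (∫⁻ y in ball (0:Rn n) 1, ω y ^ (-(1/(q-1)))) ^ (1/q') := by
            congr 1
            refine lintegral_congr fun y => ?_
            simp only [← ENNReal.rpow_mul]
            congr 1
            rw [hq']
            field_simp
        _ ≤ I ^ (1/q') := ENNReal.rpow_le_rpow
            (lintegral_mono_set (Metric.ball_subset_ball hR))
            (one_div_nonneg.2 hpq.symm.pos.le)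
  -- raise to power q
  have hol2 : V1 ^ q ≤ A * I ^ (q-1) := by
    calc V1 ^ q ≤ (A ^ (1/q) * I ^ (1/q')) ^ q := ENNReal.rpow_le_rpow hol (by positivity)
      _ = A * I ^ (q-1) := by
          rw [ENNReal.mul_rpow_of_nonneg _ _ (by positivity : (0:ℝ) ≤ q),
            ← ENNReal.rpow_mul, ← ENNReal.rpow_mul, one_div_mul_cancel hq0,
            ENNReal.rpow_one]
          congr 1
          rw [hq']
          field_simp
  -- the A_q condition at the big ball
  set VR : ℝ≥0∞ := volume (ball (0 : Rn n) R) with hVR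
  have hVRpos : VR ≠ 0 := (measure_ball_pos _ _ hRpos).ne'
  have hVRfin : VR ≠ ∞ := measure_ball_lt_top.ne
  have hq0' : (0:ℝ) ≤ q := by positivity
  have hVRq0 : VR ^ q ≠ 0 := (ENNReal.rpow_pos (hVRpos.bot_lt) hVRfin).ne'
  have hVRqfin : VR ^ q ≠ ∞ := ENNReal.rpow_ne_top_of_nonneg hq0' hVRfin
  have key : wSet ω (ball (0:Rn n) R) * I ^ (q-1) ≤ C * VR ^ q := by
    have h := hCb 0 R hRpos
    have hc : VR ^ q * VR ^ (-q) = 1 := by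
      rw [← ENNReal.rpow_add _ _ hVRpos hVRfin]
      simp
    calc wSet ω (ball (0:Rn n) R) * I ^ (q-1)
        = VR ^ q * (VR ^ (-q) * wSet ω (ball (0:Rn n) R) * I ^ (q-1)) := by
          rw [← mul_assoc, ← mul_assoc, hc, one_mul]
      _ ≤ VR ^ q * C := by
          exact mul_le_mul_right h _
      _ = C * VR ^ q := mul_comm _ _
  -- volume scaling
  have hscale : VR = ENNReal.ofReal (R ^ n) * V1 := by
    rw [hVR, hV1, Measure.addHaar_ball _ _ hRpos.le, finrank_euclideanSpace_fin]
  have main : wSet ω (ball (0:Rn n) R) * V1 ^ q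
      ≤ (A * C * (ENNReal.ofReal (R ^ n)) ^ q) * V1 ^ q := by
    calc wSet ω (ball (0:Rn n) R) * V1 ^ q
        ≤ wSet ω (ball (0:Rn n) R) * (A * I ^ (q-1)) := mul_le_mul_right hol2 _
      _ = A * (wSet ω (ball (0:Rn n) R) * I ^ (q-1)) := by ring
      _ ≤ A * (C * VR ^ q) := mul_le_mul_right key _
      _ = (A * C * (ENNReal.ofReal (R ^ n)) ^ q) * V1 ^ q := by
          rw [hscale, ENNReal.mul_rpow_of_nonneg _ _ hq0']
          ring
  have hq2 : V1 ^ q ≠ 0 := (ENNReal.rpow_pos (hV1pos.bot_lt) hV1fin).ne'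
  have hq3 : V1 ^ q ≠ ∞ := ENNReal.rpow_ne_top_of_nonneg hq0' hV1fin
  exact (ENNReal.mul_le_mul_iff_left hq2 hq3).1 main

theorem coef_bound (n : ℕ) (q c : ℝ) (hc : 0 < c) (k : ℕ) :
    Real.exp (-(c * ((n:ℝ)*q + 1))) ^ (((k:ℝ) * Real.log 2) / c)
      * ((((2:ℝ)^(k+1))^n : ℝ) ^ q)
      ≤ Real.exp (((n:ℝ)*q) * Real.log 2) * (1/2:ℝ)^k := by
  have e1 : Real.exp (-(c * ((n:ℝ)*q + 1))) ^ (((k:ℝ) * Real.log 2) / c)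
      = Real.exp (-(c * ((n:ℝ)*q + 1)) * (((k:ℝ) * Real.log 2) / c)) := by
    rw [← Real.exp_mul]
  have e2 : ((((2:ℝ)^(k+1))^n : ℝ) ^ q)
      = Real.exp ((((k+1)*n : ℕ) : ℝ) * Real.log 2 * q) := by
    rw [← pow_mul]
    rw [Real.rpow_def_of_pos (by positivity), Real.log_pow]
  have e3 : (1/2:ℝ)^k = Real.exp ((k:ℝ) * (-Real.log 2)) := by
    rw [Real.exp_nat_mul, Real.exp_neg, Real.exp_log two_pos, one_div]
  rw [e1, e2, e3, ← Real.exp_add, ← Real.exp_add]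
  refine le_of_eq (congrArg Real.exp ?_)
  push_cast
  field_simp
  ring

def annuli (n : ℕ) : ℕ → Set (Rn n)
  | 0 => ball (0:Rn n) 1
  | (j+1) => ball (0:Rn n) ((2:ℝ)^(j+1)) \ ball (0:Rn n) ((2:ℝ)^j)

def majorant {n : ℕ} (ω : Rn n → ℝ≥0∞) (K E : ℝ≥0∞) : ℕ → ℝ≥0∞
  | 0 => wSet ω (ball (0:Rn n) 1)
  | (j+1) => K * E * (ENNReal.ofReal (1/2))^j


set_option maxHeartbeats 2000000 in
/-- The weighted Nekvinda decay condition. -/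
theorem weighted_nekvinda
    (n : ℕ) (Ω : Set (Rn n)) (hΩ : IsOpen Ω)
    (ω : Rn n → ℝ≥0∞) (hω : MuckenhouptAinfty ω)
    (p : Rn n → ℝ≥0∞) (hpm : Measurable p) (hp1 : ∀ x ∈ Ω, 1 ≤ p x)
    (pinf : ℝ≥0∞) (hpinf : 1 ≤ pinf)
    (hdecay : LogHolderDecay Ω (invExp p) ((pinf)⁻¹).toReal) :
    ∃ lam : ℝ, 0 < lam ∧ lam < 1 ∧
      (∫⁻ x in Ω,
        (if invExp p x = (pinf⁻¹).toReal then 0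
          else ENNReal.ofReal (lam ^ (1 / |invExp p x - (pinf⁻¹).toReal|))) * ω x) ≠ ∞ := by
  obtain ⟨q, hq, hAq⟩ := hω
  obtain ⟨K, hK, hKb⟩ := growth hq hAq
  obtain ⟨hmeas, hae, hfin⟩ := hAq.1
  obtain ⟨c, hc, hcb⟩ := hdecay
  have hnq0 : (0:ℝ) ≤ (n:ℝ) * q := by positivity
  set lam : ℝ := Real.exp (-(c * ((n:ℝ)*q + 1))) with hlam
  have hlam0 : 0 < lam := Real.exp_pos _
  have hlam1 : lam < 1 := by
    rw [hlam, Real.exp_lt_one_iff]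
    nlinarith
  refine ⟨lam, hlam0, hlam1, ?_⟩
  set L : Rn n → ℝ := fun x => Real.log (Real.exp 1 + ‖x‖) with hLdef
  have hL1 : ∀ x : Rn n, 1 ≤ L x := fun x => by
    rw [hLdef]
    rw [Real.le_log_iff_exp_le (by positivity)]
    simpa using norm_nonneg x
  set G : Rn n → ℝ≥0∞ := fun x => ENNReal.ofReal (lam ^ (L x / c)) * ω x with hGdef
  -- pointwise bound on Ω
  have hpt : ∀ x ∈ Ω,
      (if invExp p x = (pinf⁻¹).toReal then 0
        else ENNReal.ofReal (lam ^ (1 / |invExp p x - (pinf⁻¹).toReal|))) * ω x ≤ G x := by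
    intro x hx
    split_ifs with h
    · simp
    · refine mul_le_mul_left (ENNReal.ofReal_le_ofReal ?_) _
      refine Real.rpow_le_rpow_of_exponent_ge hlam0 hlam1.le ?_
      have hd0 : 0 < |invExp p x - (pinf⁻¹).toReal| := abs_pos.2 (sub_ne_zero.2 h)
      have hdle := hcb x hx
      have hLx : 0 < L x := lt_of_lt_of_le one_pos (hL1 x)
      rw [div_le_div_iff₀ hc hd0]
      have := (le_div_iff₀ hLx).1 hdle
      nlinarith
  -- annuli
  set s : ℕ → Set (Rn n) := annuli n with hsdef
  have huniv : (univ : Set (Rn n)) ⊆ ⋃ k, s k := by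
    intro x _
    have hex : ∃ m : ℕ, ‖x‖ < 2^m := pow_unbounded_of_one_lt ‖x‖ one_lt_two
    rcases Nat.eq_zero_or_pos (Nat.find hex) with h0 | hpos
    · refine mem_iUnion.2 ⟨0, ?_⟩
      have := Nat.find_spec hex
      rw [h0] at this
      simpa [hsdef, annuli, mem_ball_zero_iff] using this
    · obtain ⟨j, hj⟩ := Nat.exists_eq_succ_of_ne_zero hpos.ne'
      refine mem_iUnion.2 ⟨j+1, ?_⟩
      have h1 : ‖x‖ < 2^(j+1) := by
        have := Nat.find_spec hex
        rwa [hj] at this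
      have h2 : ¬ (‖x‖ < 2^j) := Nat.find_min hex (by omega)
      simp only [hsdef, annuli, mem_diff, mem_ball_zero_iff]
      push_neg at h2
      exact ⟨h1, by simpa using h2⟩
  -- majorant
  set E : ℝ≥0∞ := ENNReal.ofReal (Real.exp (((n:ℝ)*q) * Real.log 2)) with hEdef
  set M : ℕ → ℝ≥0∞ := majorant ω K E with hMdef
  have hM : ∀ k, (∫⁻ x in s k, G x) ≤ M k := by
    intro k
    match k with
    | 0 =>
      rw [hsdef, hMdef]
      show (∫⁻ x in ball (0:Rn n) 1, G x) ≤ wSet ω (ball (0:Rn n) 1)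
      refine setLIntegral_mono' measurableSet_ball fun x _ => ?_
      calc G x ≤ 1 * ω x := mul_le_mul_left
            (ENNReal.ofReal_le_one.2 (Real.rpow_le_one hlam0.le hlam1.le
              (div_nonneg (zero_le_one.trans (hL1 x)) hc.le))) _
        _ = ω x := one_mul _
    | (j+1) =>
      rw [hsdef, hMdef]
      show (∫⁻ x in ball (0:Rn n) ((2:ℝ)^(j+1)) \ ball (0:Rn n) ((2:ℝ)^j), G x)
        ≤ K * E * (ENNReal.ofReal (1/2))^j
      set D : Set (Rn n) := ball (0:Rn n) ((2:ℝ)^(j+1)) \ ball (0:Rn n) ((2:ℝ)^j) with hD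
      have hsub : D ⊆ ball (0:Rn n) ((2:ℝ)^(j+1)) := diff_subset
      have hcm : MeasurableSet D := measurableSet_ball.diff measurableSet_ball
      have hstep : ∀ x ∈ D, G x ≤ ENNReal.ofReal (lam ^ (((j:ℝ) * Real.log 2)/c)) * ω x := by
        intro x hx
        refine mul_le_mul_left (ENNReal.ofReal_le_ofReal ?_) _
        refine Real.rpow_le_rpow_of_exponent_ge hlam0 hlam1.le ?_
        have hxlb : (2:ℝ)^j ≤ ‖x‖ := by
          have h2 : x ∉ ball (0:Rn n) ((2:ℝ)^j) := hx.2
          simpa [mem_ball_zero_iff, not_lt] using h2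
        have hlog : (j:ℝ) * Real.log 2 ≤ L x := by
          rw [hLdef]
          calc (j:ℝ) * Real.log 2 = Real.log ((2:ℝ)^j) := by rw [Real.log_pow]
            _ ≤ Real.log (Real.exp 1 + ‖x‖) :=
                Real.log_le_log (by positivity) (by nlinarith [Real.exp_pos 1])

        gcongr
      calc (∫⁻ x in D, G x)
          ≤ ∫⁻ x in D, ENNReal.ofReal (lam ^ (((j:ℝ)*Real.log 2)/c)) * ω x :=
            setLIntegral_mono' hcm hstep
        _ = ENNReal.ofReal (lam ^ (((j:ℝ)*Real.log 2)/c)) * ∫⁻ x in D, ω x :=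
            lintegral_const_mul' _ _ ENNReal.ofReal_ne_top
        _ ≤ ENNReal.ofReal (lam ^ (((j:ℝ)*Real.log 2)/c)) *
              wSet ω (ball (0:Rn n) ((2:ℝ)^(j+1))) :=
            mul_le_mul_right (lintegral_mono_set hsub) _
        _ ≤ ENNReal.ofReal (lam ^ (((j:ℝ)*Real.log 2)/c)) *
              (K * (ENNReal.ofReal (((2:ℝ)^(j+1))^n))^q) :=
            mul_le_mul_right (hKb _ (one_le_pow₀ one_le_two)) _
        _ = K * ENNReal.ofReal (lam ^ (((j:ℝ)*Real.log 2)/c) * ((((2:ℝ)^(j+1))^n)^q)) := by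
            rw [ENNReal.ofReal_rpow_of_pos (by positivity), mul_left_comm,
              ← ENNReal.ofReal_mul (Real.rpow_nonneg hlam0.le _)]
        _ ≤ K * ENNReal.ofReal (Real.exp (((n:ℝ)*q)*Real.log 2) * (1/2:ℝ)^j) :=
            mul_le_mul_right (ENNReal.ofReal_le_ofReal (coef_bound n q c hc j)) _
        _ = K * E * (ENNReal.ofReal (1/2))^j := by
            rw [ENNReal.ofReal_mul (Real.exp_nonneg _), ENNReal.ofReal_pow (by norm_num)]
            ring
  have hsum : (∑' k, M k) ≠ ∞ := by
    rw [tsum_eq_zero_add' ENNReal.summable]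
    refine ENNReal.add_ne_top.2 ⟨hfin _ _ one_pos, ?_⟩
    have h1 : ∀ j : ℕ, M (j+1) = K * E * (ENNReal.ofReal (1/2))^j := fun j => by
      rw [hMdef]; rfl
    simp only [h1]
    rw [ENNReal.tsum_mul_left, ENNReal.tsum_geometric]
    refine ENNReal.mul_ne_top (ENNReal.mul_ne_top hK ?_) ?_
    · rw [hEdef]; exact ENNReal.ofReal_ne_top
    · refine ENNReal.inv_ne_top.2 ?_
      have h12 : ENNReal.ofReal (1/2) < 1 := ENNReal.ofReal_lt_one.2 (by norm_num)
      exact (tsub_pos_of_lt h12).ne'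
  refine ne_top_of_le_ne_top hsum ?_
  calc (∫⁻ x in Ω,
        (if invExp p x = (pinf⁻¹).toReal then 0
          else ENNReal.ofReal (lam ^ (1 / |invExp p x - (pinf⁻¹).toReal|))) * ω x)
      ≤ ∫⁻ x in Ω, G x := setLIntegral_mono' hΩ.measurableSet hpt
    _ ≤ ∫⁻ x in (univ : Set (Rn n)), G x := lintegral_mono_set (subset_univ _)
    _ ≤ ∫⁻ x in ⋃ k, s k, G x := lintegral_mono_set huniv
    _ ≤ ∑' k, ∫⁻ x in s k, G x := lintegral_iUnion_le _ _
    _ ≤ ∑' k, M k := ENNReal.tsum_le_tsum hM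
end
end
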